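/- arXiv:2307.08151 — 7 statements merged into one kernel-verified Lean document; each statement's English description precedes it below -/
import Mathlib

section
/- Let P ⊂ ℝ^d be a rational d-polytope with normal vectors a_1, …, a_m, and let u, v ∈ ℝ^d. If there exists w ∈ ℤ^d such that ⌈⟨a_i, u⟩⌉ = ⌈⟨a_i, v + w⟩⌉ for all i = 1, …, m, then #((tP + u) ∩ ℤ^d) = #((tP + v) ∩ ℤ^d) for all t ∈ ℤ_{≥0}. -/
open Set Pointwise

noncomputable section

/-- The lattice `ℤ^d` inside `ℝ^d`. -/
def latticePts (d : ℕ) : Set (Fin d → ℝ) := {x | ∀ i, ∃ n : ℤ, x i = (n : ℝ)}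

/-- A point of `ℝ^d` with all coordinates rational. -/
def IsRationalPoint {d : ℕ} (x : Fin d → ℝ) : Prop := ∀ i, ∃ q : ℚ, x i = (q : ℝ)

/-- A rational `d`-polytope in `ℝ^d`: the convex hull of finitely many rational points
whose affine span is all of `ℝ^d`. -/
def IsRationalDPolytope {d : ℕ} (P : Set (Fin d → ℝ)) : Prop :=
  ∃ V : Finset (Fin d → ℝ), (∀ x ∈ V, IsRationalPoint x) ∧
    P = convexHull ℝ (V : Set (Fin d → ℝ)) ∧ affineSpan ℝ P = ⊤

/-- `TL P v t = #((tP + v) ∩ ℤ^d)`, the translated lattice points enumerator. -/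
def TL {d : ℕ} (P : Set (Fin d → ℝ)) (v : Fin d → ℝ) (t : ℕ) : ℕ :=
  (((fun x => (t : ℝ) • x + v) '' P) ∩ latticePts d).ncard

namespace Stmt4Aux

variable {d m : ℕ}

/-- inner product of an integer vector with a real vector -/
def ip (a : Fin d → ℤ) (x : Fin d → ℝ) : ℝ := ∑ j, (a j : ℝ) * x j

lemma ip_add (a : Fin d → ℤ) (x y : Fin d → ℝ) : ip a (x + y) = ip a x + ip a y := by
  simp [ip, mul_add, Finset.sum_add_distrib]

lemma ip_sub (a : Fin d → ℤ) (x y : Fin d → ℝ) : ip a (x - y) = ip a x - ip a y := by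
  simp [ip, mul_sub, Finset.sum_sub_distrib]

lemma ip_smul (a : Fin d → ℤ) (c : ℝ) (x : Fin d → ℝ) : ip a (c • x) = c * ip a x := by
  simp only [ip, Pi.smul_apply, smul_eq_mul, Finset.mul_sum]
  exact Finset.sum_congr rfl fun j _ => by ring

lemma ip_int (a : Fin d → ℤ) {x : Fin d → ℝ} (hx : x ∈ latticePts d) :
    ∃ N : ℤ, ip a x = (N : ℝ) := by
  choose g hg using hx
  refine ⟨∑ j, a j * g j, ?_⟩
  push_cast
  exact Finset.sum_congr rfl fun j _ => by rw [hg]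

lemma mem_P_iff {P : Set (Fin d → ℝ)} {a : Fin m → Fin d → ℤ} {b : Fin m → ℤ}
    (hpres : P = ⋂ i, {x : Fin d → ℝ | (b i : ℝ) ≤ ∑ j, (a i j : ℝ) * x j})
    (x : Fin d → ℝ) : x ∈ P ↔ ∀ i, (b i : ℝ) ≤ ip (a i) x := by
  rw [hpres]; simp [Set.mem_iInter, ip]

/-- If all inner products with the normals are nonpositive, the vector is zero. -/
lemma eq_zero_of_nonpos {P : Set (Fin d → ℝ)} (hP : IsRationalDPolytope P)
    {a : Fin m → Fin d → ℤ} {b : Fin m → ℤ}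
    (hpres : P = ⋂ i, {x : Fin d → ℝ | (b i : ℝ) ≤ ∑ j, (a i j : ℝ) * x j})
    (z : Fin d → ℝ) (hz : ∀ i, ip (a i) z ≤ 0) : z = 0 := by
  obtain ⟨V, -, hPV, hspan⟩ := hP
  obtain ⟨x, hx⟩ := AffineSubspace.nonempty_of_affineSpan_eq_top ℝ (Fin d → ℝ) (Fin d → ℝ) hspan
  have hbd : Bornology.IsBounded P := by
    rw [hPV]; exact isBounded_convexHull.mpr V.finite_toSet.isBounded
  obtain ⟨R, hR⟩ := isBounded_iff_forall_norm_le.mp hbd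
  by_contra hz0
  have hnz : 0 < ‖z‖ := by simpa [norm_pos_iff] using hz0
  obtain ⟨n, hn⟩ := exists_nat_gt ((R + ‖x‖) / ‖z‖)
  have hmem : x - (n : ℝ) • z ∈ P := by
    rw [mem_P_iff hpres]
    intro i
    have hx' := (mem_P_iff hpres x).mp hx i
    have : ip (a i) (x - (n : ℝ) • z) = ip (a i) x - (n : ℝ) * ip (a i) z := by
      rw [ip_sub, ip_smul]
    rw [this]
    nlinarith [hz i, Nat.cast_nonneg (α := ℝ) n]
  have h1 : ‖x - (n : ℝ) • z‖ ≤ R := hR _ hmem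
  have h2 : ‖(n : ℝ) • z‖ - ‖x‖ ≤ ‖x - (n : ℝ) • z‖ := by
    rw [norm_sub_rev]; exact norm_sub_norm_le _ _
  have h3 : ‖(n : ℝ) • z‖ = (n : ℝ) * ‖z‖ := by
    rw [norm_smul]; simp
  have h4 : (R + ‖x‖) < (n : ℝ) * ‖z‖ := by
    rwa [div_lt_iff₀ hnz] at hn
  linarith

/-- If the ceilings of inner products agree and `u` is a lattice point, then `u' = u`. -/
lemma eq_of_lattice {P : Set (Fin d → ℝ)} (hP : IsRationalDPolytope P)
    {a : Fin m → Fin d → ℤ} {b : Fin m → ℤ}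
    (hpres : P = ⋂ i, {x : Fin d → ℝ | (b i : ℝ) ≤ ∑ j, (a i j : ℝ) * x j})
    {u u' : Fin d → ℝ} (hcc : ∀ i, ⌈ip (a i) u⌉ = ⌈ip (a i) u'⌉)
    (hu : u ∈ latticePts d) : u' = u := by
  have hz : ∀ i, ip (a i) (u' - u) ≤ 0 := by
    intro i
    obtain ⟨N, hN⟩ := ip_int (a i) hu
    have h1 : ip (a i) u' ≤ (⌈ip (a i) u'⌉ : ℝ) := Int.le_ceil _
    have h2 : ⌈ip (a i) u'⌉ = N := by rw [← hcc i, hN, Int.ceil_intCast]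
    rw [ip_sub, hN]
    rw [h2] at h1
    linarith
  have := eq_zero_of_nonpos hP hpres _ hz
  exact sub_eq_zero.mp this

/-- membership characterization of lattice points in the dilated translated polytope -/
lemma mem_char {P : Set (Fin d → ℝ)} {a : Fin m → Fin d → ℤ} {b : Fin m → ℤ}
    (hpres : P = ⋂ i, {x : Fin d → ℝ | (b i : ℝ) ≤ ∑ j, (a i j : ℝ) * x j})
    {t : ℕ} (ht : 0 < t) (u : Fin d → ℝ) {x : Fin d → ℝ} (hx : x ∈ latticePts d) :
    x ∈ (fun p => (t : ℝ) • p + u) '' P ↔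
      ∀ i, (((t : ℤ) * b i + ⌈ip (a i) u⌉ : ℤ) : ℝ) ≤ ip (a i) x := by
  have ht' : (0 : ℝ) < (t : ℝ) := by exact_mod_cast ht
  constructor
  · rintro ⟨p, hp, rfl⟩ i
    obtain ⟨N, hN⟩ := ip_int (a i) hx
    have hb : (b i : ℝ) ≤ ip (a i) p := (mem_P_iff hpres p).mp hp i
    have hval : ip (a i) ((t : ℝ) • p + u) = (t : ℝ) * ip (a i) p + ip (a i) u := by
      rw [ip_add, ip_smul]
    rw [hN, Int.cast_le]
    have key : ip (a i) u + ((t : ℤ) * b i : ℤ) ≤ (N : ℝ) := by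
      rw [← hN, hval]
      push_cast
      nlinarith
    have := Int.ceil_le.mpr key
    rw [Int.ceil_add_intCast] at this
    omega
  · intro hineq
    refine ⟨(t : ℝ)⁻¹ • (x - u), ?_, ?_⟩
    · rw [mem_P_iff hpres]
      intro i
      have h1 := hineq i
      push_cast at h1
      have h2 : ip (a i) u ≤ (⌈ip (a i) u⌉ : ℝ) := Int.le_ceil _
      have h3 : (t : ℝ) * b i ≤ ip (a i) x - ip (a i) u := by linarith
      rw [ip_smul, ip_sub]
      calc (b i : ℝ) = (t : ℝ)⁻¹ * ((t : ℝ) * b i) := by field_simp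
        _ ≤ (t : ℝ)⁻¹ * (ip (a i) x - ip (a i) u) :=
          mul_le_mul_of_nonneg_left h3 (inv_nonneg.mpr ht'.le)
    · show (t : ℝ) • ((t : ℝ)⁻¹ • (x - u)) + u = x
      rw [smul_inv_smul₀ (ne_of_gt ht')]
      abel

end Stmt4Aux

open Stmt4Aux in
theorem stmt4 {d m : ℕ} (P : Set (Fin d → ℝ)) (hP : IsRationalDPolytope P)
    (a : Fin m → Fin d → ℤ) (b : Fin m → ℤ)
    -- the irredundant presentation `P = ⋂ᵢ {x : ⟨aᵢ, x⟩ ≥ bᵢ}` by primitive `(aᵢ, bᵢ)`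
    (hpres : P = ⋂ i, {x : Fin d → ℝ | (b i : ℝ) ≤ ∑ j, (a i j : ℝ) * x j})
    (hprim : ∀ i, Finset.univ.gcd (Fin.cons (b i) (a i)) = 1)
    (hirr : ∀ i : Fin m,
      (⋂ j ∈ Finset.univ.erase i, {x : Fin d → ℝ | (b j : ℝ) ≤ ∑ l, (a j l : ℝ) * x l}) ≠ P)
    (u v : Fin d → ℝ)
    (h : ∃ w : Fin d → ℤ, ∀ i,
      ⌈∑ j, (a i j : ℝ) * u j⌉ = ⌈∑ j, (a i j : ℝ) * (v j + (w j : ℝ))⌉) :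
    ∀ t : ℕ, TL P u t = TL P v t := by
  obtain ⟨w, hw⟩ := h
  set wR : Fin d → ℝ := fun j => (w j : ℝ) with hwR
  set v' : Fin d → ℝ := v + wR with hv'
  have hcc : ∀ i, ⌈ip (a i) u⌉ = ⌈ip (a i) v'⌉ := by
    intro i
    have := hw i
    simpa [ip, hv', hwR] using this
  have hPne : P.Nonempty := by
    obtain ⟨V, -, -, hspan⟩ := hP
    exact AffineSubspace.nonempty_of_affineSpan_eq_top ℝ (Fin d → ℝ) (Fin d → ℝ) hspan
  intro t
  -- Step 1: the lattice point sets for u and v' coincide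
  have hQ : ((fun x => (t : ℝ) • x + u) '' P) ∩ latticePts d
      = ((fun x => (t : ℝ) • x + v') '' P) ∩ latticePts d := by
    rcases Nat.eq_zero_or_pos t with ht | ht
    · subst ht
      have himg : ∀ y : Fin d → ℝ, (fun x => ((0 : ℕ) : ℝ) • x + y) '' P = {y} := by
        intro y
        have : (fun x : Fin d → ℝ => ((0 : ℕ) : ℝ) • x + y) = fun _ => y := by
          funext x; simp
        rw [this]
        exact hPne.image_const y
      rw [himg, himg]
      by_cases hu : u ∈ latticePts d
      · have : v' = u := eq_of_lattice hP hpres hcc hu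
        rw [this]
      · by_cases hv : v' ∈ latticePts d
        · have : u = v' := eq_of_lattice hP hpres (fun i => (hcc i).symm) hv
          exact absurd (this ▸ hv) hu
        · ext y
          simp only [Set.mem_inter_iff, Set.mem_singleton_iff]
          constructor
          · rintro ⟨rfl, hy⟩; exact absurd hy hu
          · rintro ⟨rfl, hy⟩; exact absurd hy hv
    · ext x
      simp only [Set.mem_inter_iff]
      constructor
      · rintro ⟨hmem, hx⟩
        refine ⟨?_, hx⟩
        rw [mem_char hpres ht v' hx]
        intro i
        have := (mem_char hpres ht u hx).mp hmem i
        rwa [hcc i] at this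
      · rintro ⟨hmem, hx⟩
        refine ⟨?_, hx⟩
        rw [mem_char hpres ht u hx]
        intro i
        have := (mem_char hpres ht v' hx).mp hmem i
        rwa [← hcc i] at this
  -- Step 2: translation by the lattice vector w
  have htrans : TL P v' t = TL P v t := by
    unfold TL
    have hinj : Function.Injective (fun x : Fin d → ℝ => x + wR) := add_left_injective wR
    have himg : (fun x : Fin d → ℝ => x + wR) ''
        (((fun x => (t : ℝ) • x + v) '' P) ∩ latticePts d)
        = ((fun x => (t : ℝ) • x + v') '' P) ∩ latticePts d := by
      rw [Set.image_inter hinj]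
      congr 1
      · rw [Set.image_image]
        apply Set.image_congr
        intro x _
        rw [hv']
        abel
      · ext y
        constructor
        · rintro ⟨x, hxL, rfl⟩ j
          obtain ⟨n, hn⟩ := hxL j
          exact ⟨n + w j, by simp [hn, hwR]⟩
        · intro hy
          refine ⟨y - wR, fun j => ?_, by simp⟩
          obtain ⟨n, hn⟩ := hy j
          exact ⟨n - w j, by simp [hn, hwR]⟩
    rw [← himg, Set.ncard_image_of_injective _ hinj]
  rw [← htrans]
  unfold TL
  rw [hQ]
end
end

section
/- Let P ⊂ ℝ^d be a rational d-polytope. Then the set of functions {f : ℤ_{≥0} → ℤ_{≥0} | there exists w ∈ ℝ^d such that f(t) = #((tP + w) ∩ ℤ^d) for all t ∈ ℤ_{≥0}} is finite. -/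
/-
A rational polytope is cut out by finitely many inequalities `⟨a, x⟩ ≤ b` with `a`, `b` integral:
its barycentric description is such a system in more variables, and Fourier–Motzkin elimination
of the weights keeps the coefficients integral. Translating by a lattice vector does not change
the count, so `w` may be taken in `[0, 1)^d`. For `t ≥ 1` a lattice point `x` lies in `tP + w` iff
`⟨a, x⟩ ≤ t b + ⟨a, w⟩` for every inequality, and as `⟨a, x⟩` is an integer this reads
`⟨a, x⟩ ≤ t b + ⌊⟨a, w⟩⌋`. Hence the counting function is determined by the value at `t = 0`,
which is `0` or `1`, and the integers `⌊⟨a, w⟩⌋`, which are bounded by `∑ |aᵢ|`.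
-/

open Set Pointwise

noncomputable section

theorem exists_forall_mul_le_iff {α : Type*} {s : Set α} (hs : s.Finite) (c r : α → ℝ) :
    (∃ y, ∀ p ∈ s, c p * y ≤ r p) ↔
      (∀ p ∈ s, c p = 0 → 0 ≤ r p) ∧
        ∀ p ∈ s, 0 < c p → ∀ q ∈ s, c q < 0 → c q * r p ≤ c p * r q := by
  constructor
  · rintro ⟨y, hy⟩
    refine ⟨fun p hp hc => by simpa [hc] using hy p hp, fun p hp hcp q hq hcq => ?_⟩
    nlinarith [hy p hp, hy q hq]
  · classical
    rintro ⟨hzero, hpair⟩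
    set ups := (fun p => r p / c p) '' {p ∈ s | 0 < c p}
    set lows := (fun q => r q / c q) '' {q ∈ s | c q < 0}
    have low_le_up : ∀ l ∈ lows, ∀ u ∈ ups, l ≤ u := by
      rintro _ ⟨q, ⟨hq, hcq⟩, rfl⟩ _ ⟨p, ⟨hp, hcp⟩, rfl⟩
      rw [div_le_iff_of_neg hcq, div_mul_eq_mul_div, div_le_iff₀ hcp]
      linarith [hpair p hp hcp q hq hcq]
    refine ⟨if ups.Nonempty then sInf ups else sSup lows, fun p hp => ?_⟩
    rcases lt_trichotomy (c p) 0 with hc | hc | hc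
    · have hl : r p / c p ∈ lows := ⟨p, ⟨hp, hc⟩, rfl⟩
      have : r p / c p ≤ if ups.Nonempty then sInf ups else sSup lows := by
        split_ifs with h
        · exact le_csInf h (low_le_up _ hl)
        · exact le_csSup ((hs.subset (sep_subset _ _)).image _).bddAbove hl
      rwa [div_le_iff_of_neg hc, mul_comm] at this
    · simpa [hc] using hzero p hp hc
    · have hu : r p / c p ∈ ups := ⟨p, ⟨hp, hc⟩, rfl⟩
      have : (if ups.Nonempty then sInf ups else sSup lows) ≤ r p / c p := by
        rw [if_pos ⟨_, hu⟩]
        exact csInf_le ((hs.subset (sep_subset _ _)).image _).bddBelow hu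
      rwa [le_div_iff₀ hc, mul_comm] at this

lemma exists_int_ne_zero_mul_eq_intCast {α : Type*} [Finite α] (f : α → ℝ)
    (hf : ∀ a, ∃ q : ℚ, f a = q) : ∃ N : ℤ, N ≠ 0 ∧ ∀ a, ∃ c : ℤ, (N : ℝ) * f a = c := by
  choose q hq using hf
  obtain ⟨⟨N, hN⟩, hNq⟩ := IsLocalization.exist_integer_multiples_of_finite (nonZeroDivisors ℤ) q
  refine ⟨N, nonZeroDivisors.ne_zero hN, fun a => ?_⟩
  obtain ⟨c, hc⟩ := hNq a
  refine ⟨c, ?_⟩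
  rw [hq a]
  exact_mod_cast hc.symm

lemma intCast_le_intCast_add_iff (m n : ℤ) (u : ℝ) : (m : ℝ) ≤ n + u ↔ m ≤ n + ⌊u⌋ := by
  rw [← Int.floor_intCast_add, Int.le_floor]

lemma mem_image_smul_add_iff {K E : Type*} [Field K] [AddCommGroup E] [Module K E] {P : Set E}
    {c : K} (hc : c ≠ 0) (r y : E) :
    y ∈ (fun x => c • x + r) '' P ↔ c⁻¹ • (y - r) ∈ P := by
  constructor
  · rintro ⟨x, hx, rfl⟩
    simpa [hc] using hx
  · intro hy
    exact ⟨_, hy, by simp [hc]⟩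

section IntPolyhedron

variable {ι : Type*} [Fintype ι]

def intDot (a : ι → ℤ) (x : ι → ℝ) : ℝ := ∑ i, (a i : ℝ) * x i

lemma intDot_sub_left (a b : ι → ℤ) (x : ι → ℝ) : intDot (a - b) x = intDot a x - intDot b x := by
  simp [intDot, sub_mul, Finset.sum_sub_distrib]

lemma intDot_neg_left (a : ι → ℤ) (x : ι → ℝ) : intDot (-a) x = -intDot a x := by
  simp [intDot, Finset.sum_neg_distrib]

lemma intDot_smul_left (c : ℤ) (a : ι → ℤ) (x : ι → ℝ) : intDot (c • a) x = c * intDot a x := by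
  simp [intDot, Finset.mul_sum, mul_assoc]

lemma intDot_sub_right (a : ι → ℤ) (x y : ι → ℝ) : intDot a (x - y) = intDot a x - intDot a y := by
  simp [intDot, mul_sub, Finset.sum_sub_distrib]

lemma intDot_smul_right (a : ι → ℤ) (c : ℝ) (x : ι → ℝ) : intDot a (c • x) = c * intDot a x := by
  simp [intDot, Finset.mul_sum, mul_left_comm]

lemma abs_intDot_le (a : ι → ℤ) {x : ι → ℝ} (hx : ∀ i, |x i| ≤ 1) :
    |intDot a x| ≤ ∑ i, |a i| := by
  push_cast
  refine (Finset.abs_sum_le_sum_abs _ _).trans (Finset.sum_le_sum fun i _ => ?_)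
  rw [abs_mul]
  exact mul_le_of_le_one_right (abs_nonneg _) (hx i)

lemma floor_intDot_mem_Icc (a : ι → ℤ) {x : ι → ℝ} (hx : ∀ i, |x i| ≤ 1) :
    ⌊intDot a x⌋ ∈ Icc (-∑ i, |a i|) (∑ i, |a i|) := by
  have h := abs_le.1 (abs_intDot_le a hx)
  constructor
  · rw [Int.le_floor]
    exact_mod_cast h.1
  · exact_mod_cast (Int.floor_le _).trans h.2

lemma intDot_single [DecidableEq ι] (j : ι) (n : ℤ) (x : ι → ℝ) :
    intDot (Pi.single j n) x = n * x j := by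
  simp [intDot, Pi.single_apply]

lemma intDot_update [DecidableEq ι] (a : ι → ℤ) (x : ι → ℝ) (i₀ : ι) (y : ℝ) :
    intDot a (Function.update x i₀ y) = a i₀ * y + intDot (Function.update a i₀ 0) x := by
  simp only [intDot]
  rw [← Finset.add_sum_erase _ _ (Finset.mem_univ i₀),
    ← Finset.add_sum_erase _ _ (Finset.mem_univ i₀)]
  simp only [Function.update_self, Int.cast_zero, zero_mul, zero_add]
  congr 1
  refine Finset.sum_congr rfl fun i hi => ?_
  have hi₀ := Finset.ne_of_mem_erase hi
  rw [Function.update_of_ne hi₀, Function.update_of_ne hi₀]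

def intPolyhedron (s : Set ((ι → ℤ) × ℤ)) : Set (ι → ℝ) := {x | ∀ p ∈ s, intDot p.1 x ≤ p.2}

def IsIntPolyhedron (S : Set (ι → ℝ)) : Prop := ∃ s, s.Finite ∧ intPolyhedron s = S

lemma isIntPolyhedron_halfspace (a : ι → ℤ) (b : ℤ) : IsIntPolyhedron {x | intDot a x ≤ b} :=
  ⟨{(a, b)}, finite_singleton _, by simp [intPolyhedron]⟩

lemma IsIntPolyhedron.inter {S T : Set (ι → ℝ)} (hS : IsIntPolyhedron S) (hT : IsIntPolyhedron T) :
    IsIntPolyhedron (S ∩ T) := by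
  obtain ⟨s, hs, rfl⟩ := hS
  obtain ⟨t, ht, rfl⟩ := hT
  exact ⟨s ∪ t, hs.union ht, by ext; simp [intPolyhedron, or_imp, forall_and]⟩

lemma isIntPolyhedron_iInter {κ : Type*} [Finite κ] {S : κ → Set (ι → ℝ)}
    (hS : ∀ k, IsIntPolyhedron (S k)) : IsIntPolyhedron (⋂ k, S k) := by
  choose s hs hsS using hS
  refine ⟨⋃ k, s k, finite_iUnion hs, ?_⟩
  ext x
  simp only [← hsS, intPolyhedron, mem_iUnion, mem_iInter, mem_ofPred_eq, forall_exists_index]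
  exact forall_comm

lemma isIntPolyhedron_hyperplane (a : ι → ℤ) (b : ℤ) : IsIntPolyhedron {x | intDot a x = b} := by
  convert (isIntPolyhedron_halfspace a b).inter (isIntPolyhedron_halfspace (-a) (-b)) using 1
  ext x
  simp only [mem_inter_iff, mem_ofPred_eq, intDot_neg_left, Int.cast_neg, neg_le_neg_iff]
  exact le_antisymm_iff

lemma IsIntPolyhedron.preimage_sumElim_zero {κ : Type*} [Fintype κ] {S : Set (κ ⊕ ι → ℝ)}
    (hS : IsIntPolyhedron S) :
    IsIntPolyhedron ((fun x : ι → ℝ => Sum.elim (0 : κ → ℝ) x) ⁻¹' S) := by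
  obtain ⟨s, hs, rfl⟩ := hS
  refine ⟨(fun p => (p.1 ∘ Sum.inr, p.2)) '' s, hs.image _, ?_⟩
  ext x
  simp only [intPolyhedron, mem_preimage, mem_ofPred_eq, forall_mem_image]
  simp [intDot, Fintype.sum_sum_type]

-- Fourier–Motzkin elimination of the coordinate `i₀`.
lemma IsIntPolyhedron.exists_update [DecidableEq ι] {S : Set (ι → ℝ)} (hS : IsIntPolyhedron S)
    (i₀ : ι) : IsIntPolyhedron {x | ∃ y, Function.update x i₀ y ∈ S} := by
  obtain ⟨s, hs, rfl⟩ := hS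
  let c : (ι → ℤ) × ℤ → ℤ := fun p => p.1 i₀
  let a : (ι → ℤ) × ℤ → (ι → ℤ) := fun p => Function.update p.1 i₀ 0
  refine ⟨(fun p => (a p, p.2)) '' {p ∈ s | c p = 0} ∪
      image2 (fun p q => (c p • a q - c q • a p, c p * q.2 - c q * p.2))
        {p ∈ s | 0 < c p} {q ∈ s | c q < 0},
    ((hs.subset (sep_subset _ _)).image _).union
      ((hs.subset (sep_subset _ _)).image2 _ (hs.subset (sep_subset _ _))), ?_⟩
  ext x
  have key := exists_forall_mul_le_iff hs (fun p => (c p : ℝ)) (fun p => p.2 - intDot (a p) x)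
  simp only [intPolyhedron, mem_ofPred_eq, intDot_update, mem_union, or_imp, forall_and,
    forall_mem_image, forall_mem_image2, and_imp, intDot_sub_left, intDot_smul_left, Int.cast_pos,
    Int.cast_lt_zero, Int.cast_eq_zero, Int.cast_sub, Int.cast_mul] at key ⊢
  have shift : (∃ y, ∀ p ∈ s, (p.1 i₀ : ℝ) * y + intDot (Function.update p.1 i₀ 0) x ≤ p.2) ↔
      ∃ y, ∀ p ∈ s, (c p : ℝ) * y ≤ p.2 - intDot (a p) x := by
    simp only [le_sub_iff_add_le, c, a]
  rw [shift, key]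
  constructor <;> rintro ⟨h₀, h₁⟩ <;>
    exact ⟨fun p hp hc => by linarith [@h₀ p hp hc],
      fun p hp hcp q hq hcq => by linarith [@h₁ p hp hcp q hq hcq]⟩

lemma IsIntPolyhedron.exists_eqOn_compl [DecidableEq ι] {S : Set (ι → ℝ)} (hS : IsIntPolyhedron S)
    (F : Finset ι) : IsIntPolyhedron {x | ∃ z ∈ S, ∀ i ∉ F, z i = x i} := by
  induction F using Finset.induction_on with
  | empty => simpa [← funext_iff] using hS
  | insert i₀ F _ ih =>
    convert ih.exists_update i₀ using 1
    ext x
    simp only [mem_ofPred_eq, Finset.mem_insert, not_or]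
    constructor
    · rintro ⟨z, hz, hzx⟩
      refine ⟨z i₀, z, hz, fun i hi => ?_⟩
      by_cases h : i = i₀
      · simp [h]
      · simp [h, hzx i ⟨h, hi⟩]
    · rintro ⟨y, z, hz, hzx⟩
      exact ⟨z, hz, fun i ⟨hi₀, hi⟩ => by simpa [hi₀] using hzx i hi⟩

lemma IsIntPolyhedron.image_comp_inr {κ : Type*} [Fintype κ] {S : Set (κ ⊕ ι → ℝ)}
    (hS : IsIntPolyhedron S) : IsIntPolyhedron ((· ∘ Sum.inr) '' S) := by
  classical
  convert (hS.exists_eqOn_compl (Finset.univ.map .inl)).preimage_sumElim_zero using 1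
  ext x
  simp only [mem_image, mem_preimage, mem_ofPred_eq, Finset.mem_map, Finset.mem_univ, true_and,
    not_exists]
  constructor
  · rintro ⟨z, hz, rfl⟩
    refine ⟨z, hz, ?_⟩
    rintro (k | i) hk
    · exact absurd rfl (hk k)
    · rfl
  · rintro ⟨z, hz, hzx⟩
    exact ⟨z, hz, funext fun i => hzx (.inr i) fun k => Sum.inl_ne_inr⟩

lemma isIntPolyhedron_sum_mul_eq {κ : Type*} [Fintype κ] (v : κ → ℝ)
    (hv : ∀ k, ∃ q : ℚ, v k = q) (i : ι) :
    IsIntPolyhedron {z : κ ⊕ ι → ℝ | ∑ k, v k * z (.inl k) = z (.inr i)} := by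
  classical
  obtain ⟨N, hN, hc⟩ := exists_int_ne_zero_mul_eq_intCast v hv
  choose c hc using hc
  convert isIntPolyhedron_hyperplane (Sum.elim c (-N • Pi.single i 1)) 0 using 1
  ext z
  simp only [mem_ofPred_eq, intDot, Fintype.sum_sum_type, Sum.elim_inl, Sum.elim_inr, ← hc]
  change _ ↔ _ + intDot (-N • Pi.single i 1) (z ∘ Sum.inr) = _
  simp_rw [intDot_smul_left, intDot_single, Function.comp_apply, mul_assoc, ← Finset.mul_sum]
  have hN' : (N : ℝ) ≠ 0 := by exact_mod_cast hN
  constructor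
  · intro h
    rw [h]
    push_cast
    ring
  · intro h
    apply mul_left_cancel₀ hN'
    push_cast at h
    linarith

theorem isIntPolyhedron_convexHull (V : Finset (ι → ℝ)) (hV : ∀ v ∈ V, ∀ i, ∃ q : ℚ, v i = q) :
    IsIntPolyhedron (convexHull ℝ (V : Set (ι → ℝ))) := by
  classical
  -- `z (.inl v)` are barycentric weights and `z (.inr i)` the coordinates of the combination.
  let S : Set (V ⊕ ι → ℝ) := {z | ∑ v, z (.inl v) = 1} ∩ (⋂ v, {z | 0 ≤ z (.inl v)}) ∩
    ⋂ i, {z | ∑ v : V, (v : ι → ℝ) i * z (.inl v) = z (.inr i)}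
  have hS : IsIntPolyhedron S := by
    refine ((?_ : IsIntPolyhedron _).inter (isIntPolyhedron_iInter fun v => ?_)).inter
      (isIntPolyhedron_iInter fun i => isIntPolyhedron_sum_mul_eq _ (fun v => hV _ v.2 i) i)
    · convert isIntPolyhedron_hyperplane (Sum.elim 1 0 : V ⊕ ι → ℤ) 1 using 1
      ext z
      simp [intDot, Fintype.sum_sum_type]
    · convert isIntPolyhedron_halfspace (-Pi.single (Sum.inl v) 1 : V ⊕ ι → ℤ) 0 using 1
      ext z
      simp [intDot_neg_left, intDot_single]
  convert hS.image_comp_inr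
  ext x
  simp only [S, mem_image, mem_inter_iff, mem_iInter, mem_ofPred_eq]
  constructor
  · intro hx
    obtain ⟨w, hw₀, hw₁, hwx⟩ := Finset.mem_convexHull'.1 hx
    refine ⟨Sum.elim (fun v => w v) x, ⟨⟨?_, fun v => hw₀ v v.2⟩, fun i => ?_⟩, rfl⟩
    · simpa [Finset.sum_attach V w] using hw₁
    · have := congrFun hwx i
      simp only [Finset.sum_apply, Pi.smul_apply, smul_eq_mul] at this
      simpa [← Finset.sum_coe_sort V, mul_comm] using this
  · rintro ⟨z, ⟨⟨hz₁, hz₀⟩, hzx⟩, rfl⟩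
    refine mem_convexHull_of_exists_fintype (fun v => z (.inl v)) (fun v : V => (v : ι → ℝ)) hz₀ hz₁
      (fun v => v.2) (funext fun i => ?_)
    simp [Finset.sum_apply, ← hzx i, mul_comm]

end IntPolyhedron

section LatticeCount

variable {d : ℕ}

lemma add_mem_latticePts {x y : Fin d → ℝ} (hx : x ∈ latticePts d) (hy : y ∈ latticePts d) :
    x + y ∈ latticePts d := fun i => by
  obtain ⟨m, hm⟩ := hx i
  obtain ⟨n, hn⟩ := hy i
  exact ⟨m + n, by simp [hm, hn]⟩

lemma neg_mem_latticePts {x : Fin d → ℝ} (hx : x ∈ latticePts d) : -x ∈ latticePts d := fun i => by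
  obtain ⟨m, hm⟩ := hx i
  exact ⟨-m, by simp [hm]⟩

lemma exists_intDot_eq_intCast (a : Fin d → ℤ) {x : Fin d → ℝ} (hx : x ∈ latticePts d) :
    ∃ m : ℤ, intDot a x = m := by
  choose n hn using hx
  exact ⟨∑ i, a i * n i, by simp [intDot, hn]⟩

lemma TL_add_of_mem_latticePts (P : Set (Fin d → ℝ)) (w : Fin d → ℝ) {n : Fin d → ℝ}
    (hn : n ∈ latticePts d) (t : ℕ) : TL P (w + n) t = TL P w t := by
  have hL : (· + n) '' latticePts d = latticePts d := by
    ext x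
    rw [image_add_right, mem_preimage]
    exact ⟨fun hx => by simpa using add_mem_latticePts hx hn,
      fun hx => add_mem_latticePts hx (neg_mem_latticePts hn)⟩
  have hshift : (fun x => (t : ℝ) • x + (w + n)) '' P ∩ latticePts d =
      (· + n) '' ((fun x => (t : ℝ) • x + w) '' P ∩ latticePts d) := by
    simp only [image_inter (add_left_injective n), image_image, hL, add_assoc]
  rw [TL, TL, hshift, ncard_image_of_injective _ (add_left_injective n)]

lemma TL_eq_TL_fract (P : Set (Fin d → ℝ)) (w : Fin d → ℝ) (t : ℕ) :
    TL P w t = TL P (fun i => Int.fract (w i)) t := by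
  calc TL P w t = TL P ((fun i => Int.fract (w i)) + fun i => (⌊w i⌋ : ℝ)) t := by
        congr 1; ext i; simp
    _ = _ := TL_add_of_mem_latticePts P _ (fun i => ⟨⌊w i⌋, rfl⟩) t

lemma TL_zero_le_one (P : Set (Fin d → ℝ)) (w : Fin d → ℝ) : TL P w 0 ≤ 1 := by
  refine (ncard_le_ncard (t := {w}) ?_ (finite_singleton w)).trans (ncard_singleton w).le
  rintro _ ⟨⟨x, -, rfl⟩, -⟩
  simp

def latticeCount (s : Set ((Fin d → ℤ) × ℤ)) (t : ℕ) (m : s → ℤ) : ℕ :=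
  {x ∈ latticePts d | ∀ p : s, intDot p.1.1 x ≤ ((t * p.1.2 + m p : ℤ) : ℝ)}.ncard

lemma TL_intPolyhedron (s : Set ((Fin d → ℤ) × ℤ)) (r : Fin d → ℝ) {t : ℕ} (ht : t ≠ 0) :
    TL (intPolyhedron s) r t = latticeCount s t fun p => ⌊intDot p.1.1 r⌋ := by
  have ht' : (0 : ℝ) < t := by positivity
  rw [TL, latticeCount]
  congr 1
  ext x
  rw [mem_inter_iff, mem_image_smul_add_iff ht'.ne', and_comm]
  refine and_congr_right fun hx => ?_
  simp only [intPolyhedron, mem_ofPred_eq, Subtype.forall]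
  refine forall₂_congr fun p _ => ?_
  obtain ⟨m, hm⟩ := exists_intDot_eq_intCast p.1 hx
  rw [intDot_smul_right, intDot_sub_right, hm, inv_mul_le_iff₀ ht', sub_le_iff_le_add, Int.cast_le,
    ← intCast_le_intCast_add_iff]
  push_cast
  rfl

end LatticeCount

theorem stmt5 {d : ℕ} (P : Set (Fin d → ℝ)) (hP : IsRationalDPolytope P) :
    {f : ℕ → ℕ | ∃ w : Fin d → ℝ, ∀ t : ℕ, f t = TL P w t}.Finite := by
  obtain ⟨V, hV, rfl, -⟩ := hP
  obtain ⟨s, hs, hsV⟩ := isIntPolyhedron_convexHull V hV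
  rw [← hsV]
  have : Finite s := hs.to_subtype
  let count : ℕ × (s → ℤ) → ℕ → ℕ := fun vm t => if t = 0 then vm.1 else latticeCount s t vm.2
  have hbox := (finite_Iic 1).prod
    (Finite.pi fun p : s => finite_Icc (-∑ i, |p.1.1 i|) (∑ i, |p.1.1 i|))
  refine (hbox.image count).subset ?_
  rintro f ⟨w, hf⟩
  let r : Fin d → ℝ := fun i => Int.fract (w i)
  have hr : ∀ i, |r i| ≤ 1 := fun i => by
    rw [abs_of_nonneg (Int.fract_nonneg _)]
    exact (Int.fract_lt_one _).le
  refine ⟨(TL (intPolyhedron s) w 0, fun p => ⌊intDot p.1.1 r⌋),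
    ⟨TL_zero_le_one _ w, fun p _ => floor_intDot_mem_Icc _ hr⟩, funext fun t => ?_⟩
  rw [hf]
  by_cases ht : t = 0
  · simp [count, ht]
  · simp only [count, if_neg ht]
    rw [TL_eq_TL_fract, TL_intPolyhedron s r ht]
end
end

section
/- Let P ⊂ ℝ^d be a rational d-polytope and let 𝒞_P = ⋂_{i=1}^m {x ∈ ℝ^{d+1} : ⟨ã_i, x⟩ ≥ 0} be the unique irredundant presentation of the cone over P with each ã_i ∈ ℤ^{d+1} primitive. For u, v ∈ ℝ^{d+1}, the following are equivalent: (1) (𝒞_P + u) ∩ ℤ^{d+1} = (𝒞_P + v) ∩ ℤ^{d+1}; (2) ⌈⟨ã_i, u⟩⌉ = ⌈⟨ã_i, v⟩⌉ for all i = 1, …, m. -/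
open Set Pointwise

noncomputable section

/-- The cone over a polytope `P ⊂ ℝ^d`: `𝒞_P = {s(x, 1) : s ≥ 0, x ∈ P} ⊂ ℝ^{d+1}`. -/
def coneOver {d : ℕ} (P : Set (Fin d → ℝ)) : Set (Fin (d + 1) → ℝ) :=
  {y | ∃ s : ℝ, 0 ≤ s ∧ ∃ x ∈ P, y = s • (Fin.snoc x 1 : Fin (d + 1) → ℝ)}

/-!
An integer point `z` lies in `𝒞_P + t` iff `⟨ãᵢ, z⟩ ≥ ⌈⟨ãᵢ, t⟩⌉` for every `i`, because
`⟨ãᵢ, z⟩` is an integer; so equal ceilings give equal lattice points. Conversely, fix a facet `i`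
and put `c = ⌈⟨ãᵢ, u⟩⌉`. Primitivity of `ãᵢ` gives (Bézout) an integer `g` with `⟨ãᵢ, g⟩ = 1`,
and irredundancy together with full-dimensionality gives an integer `w` with `⟨ãᵢ, w⟩ = 0` and
`⟨ãⱼ, w⟩ > 0` for `j ≠ i`. For large `K`, the lattice point `c g + K w` lies in `𝒞_P + u`, hence
in `𝒞_P + v`, where its `i`-th inequality reads `⌈⟨ãᵢ, v⟩⌉ ≤ c`.
-/

open Matrix

section OpenCone

variable {κ : Type*} [Fintype κ]

theorem exists_intCast_mem_of_isOpen {U : Set (κ → ℝ)} (hU : IsOpen U) {x : κ → ℝ} (hx : x ∈ U)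
    (hcone : ∀ c : ℝ, 0 < c → ∀ y ∈ U, c • y ∈ U) : ∃ z : κ → ℤ, ((↑) ∘ z : κ → ℝ) ∈ U := by
  obtain ⟨δ, hδ, hball⟩ := Metric.isOpen_iff.mp hU x hx
  obtain ⟨N, hN⟩ := exists_nat_gt (1 / (2 * δ))
  have hNpos : (0 : ℝ) < N := lt_trans (by positivity) hN
  rw [div_lt_iff₀ (by positivity)] at hN
  refine ⟨fun l => round (N * x l), ?_⟩
  have hmem : (N : ℝ)⁻¹ • (fun l => (round (N * x l) : ℝ)) ∈ U := by
    -- each coordinate moves by at most `1 / (2 N) < δ`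
    refine hball ((dist_pi_lt_iff hδ).mpr fun l => ?_)
    have hround := abs_sub_round ((N : ℝ) * x l)
    have hscale : x l - (N : ℝ)⁻¹ * round (N * x l) = (N : ℝ)⁻¹ * (N * x l - round (N * x l)) := by
      field_simp
    rw [Real.dist_eq, abs_sub_comm, Pi.smul_apply, smul_eq_mul, hscale, abs_mul, abs_inv,
      abs_of_pos hNpos, inv_mul_lt_iff₀ hNpos]
    linarith
  simpa [Function.comp_def, smul_smul, hNpos.ne'] using hcone N hNpos _ hmem

end OpenCone

section Signs

variable {ι κ : Type*} [Fintype ι] [Fintype κ]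

theorem exists_int_mulVec_mul_pos (B : Matrix ι κ ℝ) {p : κ → ℝ} (hp : ∀ j, (B *ᵥ p) j ≠ 0) :
    ∃ z : κ → ℤ, ∀ j, 0 < (B *ᵥ p) j * (B *ᵥ ((↑) ∘ z)) j := by
  refine exists_intCast_mem_of_isOpen (U := {y | ∀ j, 0 < (B *ᵥ p) j * (B *ᵥ y) j}) ?_
    (fun j => mul_self_pos.mpr (hp j)) ?_
  · simp only [Set.ofPred_forall]
    exact isOpen_iInter_of_finite fun j =>
      isOpen_lt continuous_const (continuous_const.mul ((continuous_apply j).comp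
        (continuous_const.matrix_mulVec continuous_id)))
  · intro c hc y hy j
    simpa [mulVec_smul, mul_left_comm _ c] using mul_pos hc (hy j)

theorem exists_forall_mulVec_pos {R : Type*} [CommRing R] [PartialOrder R] [IsOrderedRing R]
    (B : Matrix ι κ R) {S : Set (κ → R)} (hS : ∀ y ∈ S, 0 ≤ B *ᵥ y)
    (h : ∀ i, ∃ y ∈ S, (B *ᵥ y) i ≠ 0) : ∃ q, ∀ i, 0 < (B *ᵥ q) i := by
  choose y hyS hy using h
  refine ⟨∑ i, y i, fun i => ?_⟩
  rw [mulVec_sum, Finset.sum_apply]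
  exact ((hS _ (hyS i) i).lt_of_ne' (hy i)).trans_le
    (Finset.single_le_sum (fun k _ => hS _ (hyS k) i) (Finset.mem_univ i))

end Signs

section Combine

variable {ι κ R : Type*} [Fintype κ] [CommRing R] [LinearOrder R] [IsStrictOrderedRing R]

/-- Moving from an interior point `q` towards `p` until the `i`-th form vanishes. -/
theorem exists_mulVec_eq_zero_of_interior (B : Matrix ι κ R) {i : ι} {q p : κ → R}
    (hq : ∀ j, 0 < (B *ᵥ q) j) (hpi : (B *ᵥ p) i < 0) (hp : ∀ j ≠ i, 0 < (B *ᵥ p) j) :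
    ∃ w, (B *ᵥ w) i = 0 ∧ ∀ j ≠ i, 0 < (B *ᵥ w) j := by
  refine ⟨(-(B *ᵥ p) i) • q + (B *ᵥ q) i • p, ?_, fun j hj => ?_⟩
  · simp only [mulVec_add, mulVec_smul, Pi.add_apply, Pi.smul_apply, smul_eq_mul]
    ring
  · simp only [mulVec_add, mulVec_smul, Pi.add_apply, Pi.smul_apply, smul_eq_mul]
    exact add_pos (mul_pos (neg_pos.mpr hpi) (hq j)) (mul_pos (hq i) (hp j hj))

theorem exists_mulVec_neg_of_interior (B : Matrix ι κ R) {i : ι} {q p : κ → R}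
    (hq : ∀ j, 0 < (B *ᵥ q) j) (hpi : (B *ᵥ p) i < 0) (hp : ∀ j ≠ i, 0 ≤ (B *ᵥ p) j) :
    ∃ r, (B *ᵥ r) i < 0 ∧ ∀ j ≠ i, 0 < (B *ᵥ r) j := by
  refine ⟨(2 * (B *ᵥ q) i) • p + (-(B *ᵥ p) i) • q, ?_, fun j hj => ?_⟩
  · simp only [mulVec_add, mulVec_smul, Pi.add_apply, Pi.smul_apply, smul_eq_mul]
    nlinarith [mul_pos (hq i) (neg_pos.mpr hpi)]
  · simp only [mulVec_add, mulVec_smul, Pi.add_apply, Pi.smul_apply, smul_eq_mul]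
    exact add_pos_of_nonneg_of_pos (mul_nonneg (by linarith [hq i]) (hp j hj))
      (mul_pos (neg_pos.mpr hpi) (hq j))

end Combine

theorem latticePts_eq_range (n : ℕ) :
    latticePts n = Set.range fun z : Fin n → ℤ => ((↑) ∘ z : Fin n → ℝ) := by
  ext x
  simp only [latticePts, Set.mem_ofPred_eq, Set.mem_range, funext_iff, Function.comp_apply,
    eq_comm (a := x _), Classical.skolem]

section Lattice

variable {ι κ : Type*} [Fintype κ] (A : Matrix ι κ ℤ)

theorem map_intCast_mulVec (z : κ → ℤ) :
    A.map (↑) *ᵥ ((↑) ∘ z : κ → ℝ) = (↑) ∘ (A *ᵥ z) :=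
  funext fun i => (RingHom.map_mulVec (Int.castRingHom ℝ) A z i).symm

theorem intCast_mem_image_add_iff (t : κ → ℝ) (z : κ → ℤ) :
    ((↑) ∘ z : κ → ℝ) ∈ (fun y => y + t) '' {y | 0 ≤ A.map (↑) *ᵥ y} ↔
      ∀ i, ⌈(A.map (↑) *ᵥ t) i⌉ ≤ (A *ᵥ z) i := by
  simp only [Set.image_add_right, Set.mem_preimage, Set.mem_ofPred_eq, ← sub_eq_add_neg,
    mulVec_sub, map_intCast_mulVec, Pi.le_def, Pi.zero_apply, Pi.sub_apply, Function.comp_apply,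
    sub_nonneg, Int.ceil_le]

variable [Fintype ι]

theorem exists_int_mulVec_eq_of_gcd_eq_one {i : ι} (hprim : Finset.univ.gcd (A i) = 1)
    {w : κ → ℤ} (hwi : (A *ᵥ w) i = 0) (hw : ∀ j ≠ i, 0 < (A *ᵥ w) j) (c : ℤ) (b : ι → ℤ) :
    ∃ z, (A *ᵥ z) i = c ∧ ∀ j ≠ i, b j ≤ (A *ᵥ z) j := by
  obtain ⟨g, hg⟩ := Finset.gcd_eq_sum_mul Finset.univ (A i)
  have hgi : (A *ᵥ g) i = 1 := by rw [hprim] at hg; exact hg.symm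
  have : Nonempty ι := ⟨i⟩
  obtain ⟨K, hK⟩ := Finite.exists_le fun j => |b j - c * (A *ᵥ g) j|
  have hK0 : 0 ≤ K := (abs_nonneg _).trans (hK i)
  refine ⟨c • g + K • w, ?_, fun j hj => ?_⟩
  · simp only [mulVec_add, mulVec_smul, Pi.add_apply, Pi.smul_apply, smul_eq_mul, hgi, hwi]
    ring
  · have hbj := (le_abs_self _).trans (hK j)
    have hKw : K ≤ K * (A *ᵥ w) j := le_mul_of_one_le_right hK0 (hw j hj)
    simp only [mulVec_add, mulVec_smul, Pi.add_apply, Pi.smul_apply, smul_eq_mul]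
    linarith

theorem exists_int_mulVec_eq_zero {i : ι} (hint : ∃ q, ∀ j, 0 < (A.map (↑) *ᵥ q : ι → ℝ) j)
    (hfacet : ∃ p, (A.map (↑) *ᵥ p : ι → ℝ) i < 0 ∧ ∀ j ≠ i, 0 ≤ (A.map (↑) *ᵥ p) j) :
    ∃ w : κ → ℤ, (A *ᵥ w) i = 0 ∧ ∀ j ≠ i, 0 < (A *ᵥ w) j := by
  obtain ⟨q, hq⟩ := hint
  obtain ⟨p, hpi, hp⟩ := hfacet
  obtain ⟨r, hri, hr⟩ := exists_mulVec_neg_of_interior _ hq hpi hp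
  obtain ⟨q', hq'⟩ := exists_int_mulVec_mul_pos _ fun j => (hq j).ne'
  obtain ⟨r', hr'⟩ := exists_int_mulVec_mul_pos (p := r) _ fun j => by
    rcases eq_or_ne j i with rfl | hj
    exacts [hri.ne, (hr j hj).ne']
  simp only [map_intCast_mulVec, Function.comp_apply] at hq' hr'
  refine exists_mulVec_eq_zero_of_interior A (q := q') (p := r') (fun j => ?_) ?_ fun j hj => ?_
  · exact_mod_cast pos_of_mul_pos_right (hq' j) (hq j).le
  · exact_mod_cast neg_of_mul_pos_right (hr' i) hri.le
  · exact_mod_cast pos_of_mul_pos_right (hr' j) (hr j hj).le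

end Lattice

section Translates

variable {ι : Type*} [Fintype ι] {n : ℕ} (A : Matrix ι (Fin n) ℤ)

theorem image_add_inter_latticePts_subset_iff (hprim : ∀ i, Finset.univ.gcd (A i) = 1)
    (hint : ∃ q, ∀ j, 0 < (A.map (↑) *ᵥ q : ι → ℝ) j)
    (hfacet : ∀ i, ∃ p, (A.map (↑) *ᵥ p : ι → ℝ) i < 0 ∧ ∀ j ≠ i, 0 ≤ (A.map (↑) *ᵥ p) j)
    (u v : Fin n → ℝ) :
    (fun y => y + u) '' {y | 0 ≤ A.map (↑) *ᵥ y} ∩ latticePts n ⊆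
        (fun y => y + v) '' {y | 0 ≤ A.map (↑) *ᵥ y} ∩ latticePts n ↔
      ∀ i, ⌈(A.map (↑) *ᵥ v) i⌉ ≤ ⌈(A.map (↑) *ᵥ u) i⌉ := by
  rw [latticePts_eq_range]
  constructor
  · intro hsub i
    obtain ⟨w, hwi, hw⟩ := exists_int_mulVec_eq_zero A hint (hfacet i)
    obtain ⟨z, hzi, hz⟩ := exists_int_mulVec_eq_of_gcd_eq_one A (hprim i) hwi hw
      ⌈(A.map (↑) *ᵥ u) i⌉ fun j => ⌈(A.map (↑) *ᵥ u) j⌉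
    have hzu : ((↑) ∘ z : Fin n → ℝ) ∈ (fun y => y + u) '' {y | 0 ≤ A.map (↑) *ᵥ y} :=
      (intCast_mem_image_add_iff A u z).mpr fun j => by
        rcases eq_or_ne j i with rfl | hj
        exacts [hzi.ge, hz j hj]
    rw [← hzi]
    exact (intCast_mem_image_add_iff A v z).mp (hsub ⟨hzu, z, rfl⟩).1 i
  · rintro h _ ⟨hzu, z, rfl⟩
    exact ⟨(intCast_mem_image_add_iff A v z).mpr fun i =>
      (h i).trans ((intCast_mem_image_add_iff A u z).mp hzu i), z, rfl⟩

theorem image_add_inter_latticePts_eq_iff (hprim : ∀ i, Finset.univ.gcd (A i) = 1)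
    (hint : ∃ q, ∀ j, 0 < (A.map (↑) *ᵥ q : ι → ℝ) j)
    (hfacet : ∀ i, ∃ p, (A.map (↑) *ᵥ p : ι → ℝ) i < 0 ∧ ∀ j ≠ i, 0 ≤ (A.map (↑) *ᵥ p) j)
    (u v : Fin n → ℝ) :
    (fun y => y + u) '' {y | 0 ≤ A.map (↑) *ᵥ y} ∩ latticePts n =
        (fun y => y + v) '' {y | 0 ≤ A.map (↑) *ᵥ y} ∩ latticePts n ↔
      ∀ i, ⌈(A.map (↑) *ᵥ u) i⌉ = ⌈(A.map (↑) *ᵥ v) i⌉ := by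
  rw [Set.Subset.antisymm_iff, image_add_inter_latticePts_subset_iff A hprim hint hfacet,
    image_add_inter_latticePts_subset_iff A hprim hint hfacet, ← forall_and]
  exact forall_congr' fun i => by rw [le_antisymm_iff, and_comm]

end Translates

theorem exists_mem_coneOver_dotProduct_ne_zero {d : ℕ} {P : Set (Fin d → ℝ)}
    (hP : affineSpan ℝ P = ⊤) {a : Fin (d + 1) → ℝ} (ha : a ≠ 0) :
    ∃ y ∈ coneOver P, a ⬝ᵥ y ≠ 0 := by
  by_contra! h
  -- `x ↦ a ⬝ᵥ (x, 1)` is affine and vanishes on `P`, hence everywhere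
  let f : (Fin d → ℝ) →ᵃ[ℝ] ℝ :=
    (dotProductBilin ℝ ℝ (Fin.init a)).toAffineMap + AffineMap.const ℝ _ (a (Fin.last d))
  have hf : ∀ x, f x = a ⬝ᵥ Fin.snoc x 1 := fun x => by
    simp [f, dotProduct, Fin.sum_univ_castSucc, Fin.init]
  have hf0 : f = AffineMap.const ℝ _ 0 :=
    AffineMap.ext_on hP fun x hx => (hf x).trans (h _ ⟨1, zero_le_one, x, hx, (one_smul _ _).symm⟩)
  have hlast : a (Fin.last d) = 0 := by simpa [f] using AffineMap.congr_fun hf0 0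
  refine ha (funext fun l => ?_)
  induction l using Fin.lastCases with
  | last => exact hlast
  | cast l => simpa [f, hlast, Fin.init] using AffineMap.congr_fun hf0 (Pi.single l 1)

theorem exists_notMem_forall_mem_of_biInter_erase_ne {α ι : Type*} [Fintype ι] [DecidableEq ι]
    (s : ι → Set α) (i : ι) (h : ⋂ j ∈ Finset.univ.erase i, s j ≠ ⋂ j, s j) :
    ∃ x, x ∉ s i ∧ ∀ j ≠ i, x ∈ s j := by
  by_contra! H
  refine h (Set.ext fun x => ?_)
  simp only [Set.mem_iInter, Finset.mem_erase, Finset.mem_univ, and_true]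
  refine ⟨fun hx j => ?_, fun hx j _ => hx j⟩
  rcases eq_or_ne j i with rfl | hj
  · by_contra hxj
    obtain ⟨k, hk, hxk⟩ := H x hxj
    exact hxk (hx k hk)
  · exact hx j hj

theorem stmt7 {d m : ℕ} (P : Set (Fin d → ℝ)) (hP : IsRationalDPolytope P)
    (A : Fin m → Fin (d + 1) → ℤ)
    -- the irredundant presentation `𝒞_P = ⋂ᵢ {x : ⟨ãᵢ, x⟩ ≥ 0}` by primitive `ãᵢ`
    (hpres : coneOver P = ⋂ i, {y : Fin (d + 1) → ℝ | 0 ≤ ∑ j, (A i j : ℝ) * y j})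
    (hprim : ∀ i, Finset.univ.gcd (A i) = 1)
    (hirr : ∀ i : Fin m,
      (⋂ j ∈ Finset.univ.erase i, {y : Fin (d + 1) → ℝ | 0 ≤ ∑ l, (A j l : ℝ) * y l}) ≠
        coneOver P)
    (u v : Fin (d + 1) → ℝ) :
    ((fun y => y + u) '' coneOver P ∩ latticePts (d + 1) =
        (fun y => y + v) '' coneOver P ∩ latticePts (d + 1)) ↔
      ∀ i, ⌈∑ j, (A i j : ℝ) * u j⌉ = ⌈∑ j, (A i j : ℝ) * v j⌉ := by
  have hcone : coneOver P = {y | 0 ≤ Matrix.map A (↑) *ᵥ y} := by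
    rw [hpres]
    ext y
    simp only [Set.mem_iInter]
    rfl
  have hrow : ∀ i, Matrix.map A (↑) i ≠ (0 : Fin (d + 1) → ℝ) := fun i hi => by
    have hA : ∀ j, A i j = 0 := fun j => Int.cast_eq_zero.mp (congrFun hi j)
    exact zero_ne_one ((Finset.gcd_eq_zero_iff.mpr fun j _ => hA j).symm.trans (hprim i))
  obtain ⟨-, -, -, hspan⟩ := hP
  have hint := exists_forall_mulVec_pos _ (fun _ hy => hcone.subset hy)
    fun i => exists_mem_coneOver_dotProduct_ne_zero hspan (hrow i)
  have hfacet : ∀ i, ∃ p, (Matrix.map A (↑) *ᵥ p : Fin m → ℝ) i < 0 ∧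
      ∀ j ≠ i, 0 ≤ (Matrix.map A (↑) *ᵥ p) j := fun i => by
    obtain ⟨p, hpi, hp⟩ := exists_notMem_forall_mem_of_biInter_erase_ne _ i (hpres ▸ hirr i)
    exact ⟨p, not_le.mp hpi, hp⟩
  rw [hcone]
  exact image_add_inter_latticePts_eq_iff A hprim hint hfacet u v
end
end

section
/- Let P ⊂ ℝ^d be a rational d-polytope with normal vectors a_1, …, a_m, and let u, v ∈ ℝ^d. The following are equivalent: (1) (𝒞_P + (u, 0)) ∩ ℤ^{d+1} = (𝒞_P + (v, 0)) ∩ ℤ^{d+1}; (2) ⌈⟨a_i, u⟩⌉ = ⌈⟨a_i, v⟩⌉ for all i = 1, …, m. -/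
/-!
A lattice point `(z, n)` lies in `𝒞_P + (u, 0)` iff either `n = 0` and `z = u`, or `n > 0` and
`n bᵢ + ⌈⟨aᵢ, u⟩⌉ ≤ ⟨aᵢ, z⟩` for all `i`, since `⟨aᵢ, z⟩ - n bᵢ` is an integer. So equal ceilings
give the same lattice points at positive height; at height `0`, an integral `u` with the same
ceilings as `v` satisfies `⟨aᵢ, v - u⟩ ≤ 0` for all `i`, hence `v = u` because the bounded `P` has
trivial recession cone.

Conversely, if `⌈⟨aᵢ, u⟩⌉ < ⌈⟨aᵢ, v⟩⌉`, we look for a lattice point at positive height with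
`⟨aᵢ, z⟩ - n bᵢ = ⌈⟨aᵢ, u⟩⌉` that satisfies all the other inequalities: it lies in `𝒞_P + (u, 0)`
but not in `𝒞_P + (v, 0)`. Primitivity of `(aᵢ, bᵢ)` gives, by Bézout, a lattice point on that
level, and adding a large multiple of a lattice point of the cone over the relative interior of
the facet `i` (which exists by irredundancy, since rational points are dense in the facet
hyperplane) makes all the other inequalities hold.
-/

open Set Pointwise

noncomputable section

open Matrix Filter Topology

section Halfspaces

variable {d : ℕ} {ι : Type*}

theorem eq_zero_of_forall_dotProduct_nonpos {α : ι → Fin d → ℝ} {β : ι → ℝ}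
    {P : Set (Fin d → ℝ)} (hPα : P = ⋂ i, {x | β i ≤ α i ⬝ᵥ x})
    (hbdd : Bornology.IsBounded P) (hne : P.Nonempty) {w : Fin d → ℝ}
    (hw : ∀ i, α i ⬝ᵥ w ≤ 0) : w = 0 := by
  obtain ⟨x, hx⟩ := hne
  have hray : ∀ t : ℝ, 0 ≤ t → x - t • w ∈ P := by
    intro t ht
    rw [hPα] at hx ⊢
    simp only [mem_iInter, mem_ofPred_eq, dotProduct_sub, dotProduct_smul, smul_eq_mul] at hx ⊢
    exact fun i => by nlinarith [hx i, hw i]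
  obtain ⟨C, hC⟩ := hbdd.exists_norm_le
  have hbound : ∀ t : ℝ, 0 ≤ t → t * ‖w‖ ≤ ‖x‖ + C := fun t ht =>
    calc t * ‖w‖ = ‖x - (x - t • w)‖ := by rw [sub_sub_cancel, norm_smul, Real.norm_of_nonneg ht]
      _ ≤ ‖x‖ + ‖x - t • w‖ := norm_sub_le _ _
      _ ≤ ‖x‖ + C := by gcongr; exact hC _ (hray t ht)
  by_contra hw0
  have hpos : 0 < ‖w‖ := norm_pos_iff.mpr hw0
  have hxC : 0 ≤ ‖x‖ + C := by linarith [norm_nonneg x, hC x hx]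
  have := hbound ((‖x‖ + C + 1) / ‖w‖) (by positivity)
  rw [div_mul_cancel₀ _ hpos.ne'] at this
  linarith

theorem lt_dotProduct_of_mem_interior {α : Fin d → ℝ} {β : ℝ} (hα : α ≠ 0) {q : Fin d → ℝ}
    (hq : q ∈ interior {x | β ≤ α ⬝ᵥ x}) : β < α ⬝ᵥ q := by
  have hnear : ∀ᶠ t in 𝓝 (0 : ℝ), q - t • α ∈ {x | β ≤ α ⬝ᵥ x} :=
    ((Continuous.tendsto' (by fun_prop) 0 q (by simp)).eventually
      (mem_interior_iff_mem_nhds.mp hq))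
  obtain ⟨t, ht, hmem⟩ := hnear.exists_gt
  have hαα : 0 < α ⬝ᵥ α :=
    lt_of_le_of_ne (Finset.sum_nonneg fun j _ => mul_self_nonneg (α j))
      (Ne.symm (dotProduct_self_eq_zero.not.mpr hα))
  simp only [mem_ofPred_eq, dotProduct_sub, dotProduct_smul, smul_eq_mul] at hmem
  nlinarith

theorem exists_forall_lt_dotProduct {α : ι → Fin d → ℝ} {β : ι → ℝ} {P : Set (Fin d → ℝ)}
    (hPα : P = ⋂ i, {x | β i ≤ α i ⬝ᵥ x}) (hint : (interior P).Nonempty) (hα : ∀ i, α i ≠ 0) :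
    ∃ q, ∀ i, β i < α i ⬝ᵥ q := by
  obtain ⟨q, hq⟩ := hint
  refine ⟨q, fun i => lt_dotProduct_of_mem_interior (hα i) (interior_mono ?_ hq)⟩
  exact hPα ▸ iInter_subset _ i

theorem exists_dotProduct_lt_of_biInter_erase_ne [Fintype ι] [DecidableEq ι]
    {α : ι → Fin d → ℝ} {β : ι → ℝ} {P : Set (Fin d → ℝ)}
    (hPα : P = ⋂ i, {x | β i ≤ α i ⬝ᵥ x}) {i : ι}
    (hirr : (⋂ j ∈ Finset.univ.erase i, {x | β j ≤ α j ⬝ᵥ x}) ≠ P) :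
    ∃ x, α i ⬝ᵥ x < β i ∧ ∀ j ≠ i, β j ≤ α j ⬝ᵥ x := by
  by_contra! h
  subst hPα
  refine hirr (Subset.antisymm (fun x hx => mem_iInter.mpr fun j => ?_)
    (subset_iInter₂ fun j _ => iInter_subset _ j))
  simp only [Finset.mem_erase, Finset.mem_univ, and_true, mem_iInter, mem_ofPred_eq] at hx
  show β j ≤ α j ⬝ᵥ x
  rcases eq_or_ne j i with rfl | hj
  · by_contra! hlt
    obtain ⟨k, hk, hkx⟩ := h x hlt
    exact (hx k hk).not_gt hkx
  · exact hx j hj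

theorem exists_dotProduct_eq_forall_lt {α : ι → Fin d → ℝ} {β : ι → ℝ} {i : ι}
    {q x : Fin d → ℝ} (hq : ∀ j, β j < α j ⬝ᵥ q) (hxi : α i ⬝ᵥ x < β i)
    (hx : ∀ j ≠ i, β j ≤ α j ⬝ᵥ x) :
    ∃ y, α i ⬝ᵥ y = β i ∧ ∀ j ≠ i, β j < α j ⬝ᵥ y := by
  have hgap : 0 < α i ⬝ᵥ q - α i ⬝ᵥ x := by linarith [hq i]
  set t := (α i ⬝ᵥ q - β i) / (α i ⬝ᵥ q - α i ⬝ᵥ x)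
  have ht1 : t < 1 := (div_lt_one hgap).mpr (by linarith)
  have hy : ∀ j, α j ⬝ᵥ (q + t • (x - q)) = α j ⬝ᵥ q + t * (α j ⬝ᵥ x - α j ⬝ᵥ q) := fun j => by
    rw [dotProduct_add, dotProduct_smul, dotProduct_sub, smul_eq_mul]
  have ht : t * (α i ⬝ᵥ q - α i ⬝ᵥ x) = α i ⬝ᵥ q - β i := div_mul_cancel₀ _ hgap.ne'
  refine ⟨q + t • (x - q), ?_, fun j hj => ?_⟩
  · rw [hy]
    linear_combination -ht
  · rw [hy]
    nlinarith [hq j, hx j hj, div_pos (sub_pos.mpr (hq i)) hgap]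

end Halfspaces

section RationalPoints

variable {d : ℕ}

theorem intCast_dotProduct (a z : Fin d → ℤ) :
    ((a ⬝ᵥ z : ℤ) : ℝ) = (Int.cast ∘ a) ⬝ᵥ (Int.cast ∘ z) :=
  (Int.castRingHom ℝ).map_dotProduct a z

theorem exists_isRationalPoint_dotProduct_eq_mem {a : Fin d → ℤ} (ha : a ≠ 0) (b : ℤ)
    {U : Set (Fin d → ℝ)} (hU : IsOpen U) {y : Fin d → ℝ}
    (hy : (Int.cast ∘ a) ⬝ᵥ y = b) (hyU : y ∈ U) :
    ∃ p, IsRationalPoint p ∧ (Int.cast ∘ a) ⬝ᵥ p = b ∧ p ∈ U := by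
  obtain ⟨j₀, hj₀⟩ := Function.ne_iff.mp ha
  have hj₀' : (a j₀ : ℝ) ≠ 0 := Int.cast_ne_zero.mpr hj₀
  -- moving along the `j₀`-th axis projects onto the hyperplane and preserves rationality
  let g : (Fin d → ℝ) → (Fin d → ℝ) := fun x =>
    x + ((b - (Int.cast ∘ a) ⬝ᵥ x) / a j₀) • Pi.single j₀ 1
  have hg : ∀ x, (Int.cast ∘ a) ⬝ᵥ g x = b := fun x => by
    simp only [g, dotProduct_add, dotProduct_smul, dotProduct_single_one, smul_eq_mul,
      Function.comp_apply]
    field_simp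
    ring
  have hgy : g y = y := by simp [g, hy]
  have hgc : Continuous g := by fun_prop
  obtain ⟨r, hr⟩ := (DenseRange.piMap fun _ => Rat.denseRange_cast).exists_mem_open
    (hU.preimage hgc) ⟨y, by simpa [hgy] using hyU⟩
  refine ⟨g (Pi.map (fun _ => Rat.cast) r), fun l => ?_, hg _, hr⟩
  refine ⟨r l + ((b - ∑ k, a k * r k) / a j₀) * (Pi.single j₀ 1 : Fin d → ℚ) l, ?_⟩
  by_cases hl : l = j₀ <;> simp [g, dotProduct, hl]

theorem IsRationalPoint.exists_smul_eq_intCast {p : Fin d → ℝ} (hp : IsRationalPoint p) :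
    ∃ D : ℤ, 0 < D ∧ ∃ w : Fin d → ℤ, (D : ℝ) • p = Int.cast ∘ w := by
  choose q hq using hp
  refine ⟨∏ l, ((q l).den : ℤ), Finset.prod_pos fun l _ => by exact_mod_cast (q l).pos,
    fun l => (q l).num * ∏ k ∈ Finset.univ.erase l, ((q k).den : ℤ), funext fun l => ?_⟩
  have hden : (q l : ℝ) * (q l).den = (q l).num := by exact_mod_cast Rat.mul_den_eq_num (q l)
  simp only [Pi.smul_apply, smul_eq_mul, Function.comp_apply, hq,
    ← Finset.mul_prod_erase _ _ (Finset.mem_univ l)]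
  push_cast
  rw [← hden]
  ring

theorem exists_int_dotProduct_eq_forall_lt {ι : Type*} {a : ι → Fin d → ℤ} {b : ι → ℤ} {i : ι}
    {p : Fin d → ℝ} (hp : IsRationalPoint p) (hpi : (Int.cast ∘ a i) ⬝ᵥ p = b i)
    (hpj : ∀ j ≠ i, (b j : ℝ) < (Int.cast ∘ a j) ⬝ᵥ p) :
    ∃ D : ℤ, 0 < D ∧ ∃ w : Fin d → ℤ, a i ⬝ᵥ w = D * b i ∧ ∀ j ≠ i, D * b j < a j ⬝ᵥ w := by
  obtain ⟨D, hD, w, hw⟩ := hp.exists_smul_eq_intCast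
  have hcast : ∀ j, ((a j ⬝ᵥ w : ℤ) : ℝ) = D * (Int.cast ∘ a j) ⬝ᵥ p := fun j => by
    rw [intCast_dotProduct, ← hw, dotProduct_smul, smul_eq_mul]
  refine ⟨D, hD, w, ?_, fun j hj => ?_⟩
  · have heq : ((a i ⬝ᵥ w : ℤ) : ℝ) = ((D * b i : ℤ) : ℝ) := by
      rw [hcast, hpi, Int.cast_mul]
    exact_mod_cast heq
  · have hlt : ((D * b j : ℤ) : ℝ) < ((a j ⬝ᵥ w : ℤ) : ℝ) := by
      rw [hcast, Int.cast_mul]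
      exact mul_lt_mul_of_pos_left (hpj j hj) (Int.cast_pos.mpr hD)
    exact_mod_cast hlt

end RationalPoints

section LatticePoints

variable {d : ℕ} {ι : Type*}

theorem exists_dotProduct_sub_mul_eq {a : Fin d → ℤ} {b : ℤ}
    (hprim : Finset.univ.gcd (Fin.cons b a : Fin (d + 1) → ℤ) = 1) (c : ℤ) :
    ∃ (z : Fin d → ℤ) (n : ℤ), a ⬝ᵥ z - n * b = c := by
  obtain ⟨g, hg⟩ := Finset.gcd_eq_sum_mul Finset.univ (Fin.cons b a : Fin (d + 1) → ℤ)
  rw [hprim, Fin.sum_univ_succ] at hg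
  simp only [Fin.cons_zero, Fin.cons_succ] at hg
  refine ⟨c • (g ∘ Fin.succ), -(c * g 0), ?_⟩
  rw [dotProduct_smul, smul_eq_mul]
  simp only [dotProduct, Function.comp_apply]
  linear_combination (-c) * hg

theorem exists_pos_dotProduct_eq_add_forall_le [Finite ι] {a : ι → Fin d → ℤ} {b : ι → ℤ} {i : ι}
    (hprim : Finset.univ.gcd (Fin.cons (b i) (a i) : Fin (d + 1) → ℤ) = 1)
    {D : ℤ} (hD : 0 < D) {w : Fin d → ℤ} (hwi : a i ⬝ᵥ w = D * b i)
    (hwj : ∀ j ≠ i, D * b j < a j ⬝ᵥ w) (c : ι → ℤ) :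
    ∃ (z : Fin d → ℤ) (n : ℤ), 0 < n ∧ a i ⬝ᵥ z = n * b i + c i ∧
      ∀ j, n * b j + c j ≤ a j ⬝ᵥ z := by
  obtain ⟨z₀, n₀, h₀⟩ := exists_dotProduct_sub_mul_eq hprim (c i)
  -- moving along `(w, D)` keeps the `i`-th level and raises all the others
  obtain ⟨k, hk0, hkn, hkj⟩ := ((eventually_ge_atTop 0).and ((eventually_ge_atTop (1 - n₀)).and
    (eventually_all.2 fun j => eventually_ge_atTop (c j - (a j ⬝ᵥ z₀ - n₀ * b j))))).exists
  have hlevel : ∀ j, a j ⬝ᵥ (z₀ + k • w) - (n₀ + k * D) * b j =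
      (a j ⬝ᵥ z₀ - n₀ * b j) + k * (a j ⬝ᵥ w - D * b j) := fun j => by
    rw [dotProduct_add, dotProduct_smul, smul_eq_mul]
    ring
  have hleveli : a i ⬝ᵥ (z₀ + k • w) = (n₀ + k * D) * b i + c i := by
    have := hlevel i
    rw [h₀, hwi, sub_self, mul_zero, add_zero] at this
    linarith
  refine ⟨z₀ + k • w, n₀ + k * D, by nlinarith, hleveli, fun j => ?_⟩
  rcases eq_or_ne j i with rfl | hj
  · exact hleveli.ge
  · nlinarith [hlevel j, hwj j hj, hkj j]

end LatticePoints

section ShiftedCone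

variable {d : ℕ} {ι : Type*}

def shiftedCone (P : Set (Fin d → ℝ)) (u : Fin d → ℝ) : Set (Fin (d + 1) → ℝ) :=
  (fun y => y + (Fin.snoc u 0 : Fin (d + 1) → ℝ)) '' coneOver P

theorem smul_snoc_one_add_snoc_zero (s : ℝ) (x u : Fin d → ℝ) :
    s • (Fin.snoc x 1 : Fin (d + 1) → ℝ) + Fin.snoc u 0 = Fin.snoc (s • x + u) s := by
  ext k
  refine Fin.lastCases ?_ (fun l => ?_) k <;> simp

theorem snoc_mem_shiftedCone_iff {P : Set (Fin d → ℝ)} (hne : P.Nonempty) (u z : Fin d → ℝ)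
    (t : ℝ) : (Fin.snoc z t : Fin (d + 1) → ℝ) ∈ shiftedCone P u ↔
      (t = 0 ∧ z = u) ∨ (0 < t ∧ t⁻¹ • (z - u) ∈ P) := by
  simp only [shiftedCone, coneOver, mem_image, mem_ofPred_eq]
  constructor
  · rintro ⟨_, ⟨s, hs, x, hx, rfl⟩, h⟩
    rw [smul_snoc_one_add_snoc_zero, Fin.snoc_inj] at h
    obtain ⟨rfl, rfl⟩ := h
    rcases hs.eq_or_lt with rfl | hs
    · simp
    · exact Or.inr ⟨hs, by rwa [add_sub_cancel_right, inv_smul_smul₀ hs.ne']⟩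
  · rintro (⟨rfl, rfl⟩ | ⟨ht, hmem⟩)
    · obtain ⟨x, hx⟩ := hne
      exact ⟨_, ⟨0, le_rfl, x, hx, rfl⟩, by simp⟩
    · refine ⟨_, ⟨t, ht.le, _, hmem, rfl⟩, ?_⟩
      rw [smul_snoc_one_add_snoc_zero, smul_inv_smul₀ ht.ne', sub_add_cancel]

theorem mem_latticePts_iff_exists_snoc {y : Fin (d + 1) → ℝ} :
    y ∈ latticePts (d + 1) ↔ ∃ (z : Fin d → ℤ) (n : ℤ), y = Fin.snoc (Int.cast ∘ z) (n : ℝ) := by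
  constructor
  · intro hy
    choose f hf using hy
    refine ⟨Fin.init f, f (Fin.last d), ?_⟩
    rw [← Fin.comp_snoc, Fin.snoc_init_self]
    exact funext hf
  · rintro ⟨z, n, rfl⟩ k
    exact Fin.lastCases ⟨n, by simp⟩ (fun l => ⟨z l, by simp⟩) k

variable {a : ι → Fin d → ℤ} {b : ι → ℤ} {P : Set (Fin d → ℝ)}

theorem intCast_snoc_mem_shiftedCone_iff
    (hPab : P = ⋂ i, {x | (b i : ℝ) ≤ (Int.cast ∘ a i) ⬝ᵥ x}) (hne : P.Nonempty)
    (u : Fin d → ℝ) (z : Fin d → ℤ) {n : ℤ} (hn : 0 < n) :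
    (Fin.snoc (Int.cast ∘ z) (n : ℝ) : Fin (d + 1) → ℝ) ∈ shiftedCone P u ↔
      ∀ i, n * b i + ⌈(Int.cast ∘ a i) ⬝ᵥ u⌉ ≤ a i ⬝ᵥ z := by
  have hn' : (0 : ℝ) < n := Int.cast_pos.mpr hn
  rw [snoc_mem_shiftedCone_iff hne, hPab]
  simp only [hn'.ne', hn', false_and, false_or, true_and, mem_iInter, mem_ofPred_eq]
  refine forall_congr' fun i => ?_
  rw [dotProduct_smul, smul_eq_mul, dotProduct_sub, ← intCast_dotProduct, inv_mul_eq_div,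
    le_div_iff₀ hn', ← le_sub_iff_add_le', Int.ceil_le]
  push_cast
  constructor <;> intro h <;> linarith

theorem eq_intCast_of_ceil_dotProduct_eq
    (hPab : P = ⋂ i, {x | (b i : ℝ) ≤ (Int.cast ∘ a i) ⬝ᵥ x})
    (hbdd : Bornology.IsBounded P) (hne : P.Nonempty) {z : Fin d → ℤ} {v : Fin d → ℝ}
    (hc : ∀ i, ⌈(Int.cast ∘ a i) ⬝ᵥ (Int.cast ∘ z : Fin d → ℝ)⌉ = ⌈(Int.cast ∘ a i) ⬝ᵥ v⌉) :
    v = Int.cast ∘ z := by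
  refine sub_eq_zero.mp (eq_zero_of_forall_dotProduct_nonpos hPab hbdd hne fun i => ?_)
  have hzi := hc i
  rw [← intCast_dotProduct, Int.ceil_intCast] at hzi
  rw [dotProduct_sub, ← intCast_dotProduct, sub_nonpos, hzi]
  exact Int.le_ceil _

theorem shiftedCone_inter_latticePts_eq_of_ceil_eq
    (hPab : P = ⋂ i, {x | (b i : ℝ) ≤ (Int.cast ∘ a i) ⬝ᵥ x})
    (hbdd : Bornology.IsBounded P) (hne : P.Nonempty) {u v : Fin d → ℝ}
    (hc : ∀ i, ⌈(Int.cast ∘ a i) ⬝ᵥ u⌉ = ⌈(Int.cast ∘ a i) ⬝ᵥ v⌉) :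
    shiftedCone P u ∩ latticePts (d + 1) = shiftedCone P v ∩ latticePts (d + 1) := by
  ext y
  simp only [mem_inter_iff, and_congr_left_iff]
  intro hy
  obtain ⟨z, n, rfl⟩ := mem_latticePts_iff_exists_snoc.mp hy
  rcases lt_trichotomy n 0 with hn | rfl | hn
  · have hn' : (n : ℝ) < 0 := Int.cast_lt_zero.mpr hn
    simp [snoc_mem_shiftedCone_iff hne, hn'.ne, hn'.not_gt]
  · simp only [snoc_mem_shiftedCone_iff hne, Int.cast_zero, lt_irrefl, false_and, or_false,
      true_and]
    constructor <;> rintro rfl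
    · exact (eq_intCast_of_ceil_dotProduct_eq hPab hbdd hne hc).symm
    · exact (eq_intCast_of_ceil_dotProduct_eq hPab hbdd hne fun i => (hc i).symm).symm
  · simp only [intCast_snoc_mem_shiftedCone_iff hPab hne _ z hn, hc]

end ShiftedCone

section Polytope

variable {d : ℕ} {P : Set (Fin d → ℝ)}

theorem IsRationalDPolytope.isBounded (hP : IsRationalDPolytope P) : Bornology.IsBounded P := by
  obtain ⟨V, -, rfl, -⟩ := hP
  exact (V.finite_toSet.isCompact_convexHull (𝕜 := ℝ)).isBounded

theorem IsRationalDPolytope.interior_nonempty (hP : IsRationalDPolytope P) :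
    (interior P).Nonempty := by
  obtain ⟨V, -, rfl, htop⟩ := hP
  exact (convex_convexHull ℝ _).interior_nonempty_iff_affineSpan_eq_top.mpr htop

theorem IsRationalDPolytope.nonempty (hP : IsRationalDPolytope P) : P.Nonempty :=
  hP.interior_nonempty.mono interior_subset

variable {ι : Type*} [Fintype ι] [DecidableEq ι] {a : ι → Fin d → ℤ} {b : ι → ℤ}

theorem IsRationalDPolytope.exists_int_facet_direction (hP : IsRationalDPolytope P)
    (hPab : P = ⋂ i, {x | (b i : ℝ) ≤ (Int.cast ∘ a i) ⬝ᵥ x})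
    (hirr : ∀ i, (⋂ j ∈ Finset.univ.erase i, {x | (b j : ℝ) ≤ (Int.cast ∘ a j) ⬝ᵥ x}) ≠ P)
    (i : ι) :
    ∃ D : ℤ, 0 < D ∧ ∃ w : Fin d → ℤ, a i ⬝ᵥ w = D * b i ∧ ∀ j ≠ i, D * b j < a j ⬝ᵥ w := by
  have hout := fun j => exists_dotProduct_lt_of_biInter_erase_ne hPab (hirr j)
  have ha : ∀ j, a j ≠ 0 := fun j hj => by
    obtain ⟨x, hx, -⟩ := hout j
    obtain ⟨p, hp⟩ := hP.nonempty
    have hpj : (b j : ℝ) ≤ (Int.cast ∘ a j) ⬝ᵥ p := by rw [hPab] at hp; exact mem_iInter.mp hp j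
    have h0 : (Int.cast ∘ a j : Fin d → ℝ) = 0 := by simp [hj]
    rw [h0, zero_dotProduct] at hx hpj
    linarith
  have hα : ∀ j, (Int.cast ∘ a j : Fin d → ℝ) ≠ 0 := fun j h =>
    ha j (funext fun l => by simpa using congrFun h l)
  obtain ⟨q, hq⟩ := exists_forall_lt_dotProduct hPab hP.interior_nonempty hα
  obtain ⟨x, hxi, hxj⟩ := hout i
  obtain ⟨y, hyi, hyj⟩ := exists_dotProduct_eq_forall_lt hq hxi hxj
  have hU : IsOpen {x : Fin d → ℝ | ∀ j ≠ i, (b j : ℝ) < (Int.cast ∘ a j) ⬝ᵥ x} := by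
    simp only [ofPred_forall]
    exact isOpen_iInter_of_finite fun j => isOpen_iInter_of_finite fun _ =>
      isOpen_lt continuous_const (by fun_prop)
  obtain ⟨p, hp, hpi, hpj⟩ := exists_isRationalPoint_dotProduct_eq_mem (ha i) (b i) hU hyi hyj
  exact exists_int_dotProduct_eq_forall_lt hp hpi hpj

theorem IsRationalDPolytope.ceil_dotProduct_le_of_subset (hP : IsRationalDPolytope P)
    (hPab : P = ⋂ i, {x | (b i : ℝ) ≤ (Int.cast ∘ a i) ⬝ᵥ x})
    (hirr : ∀ i, (⋂ j ∈ Finset.univ.erase i, {x | (b j : ℝ) ≤ (Int.cast ∘ a j) ⬝ᵥ x}) ≠ P)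
    (i : ι) (hprim : Finset.univ.gcd (Fin.cons (b i) (a i) : Fin (d + 1) → ℤ) = 1)
    {u v : Fin d → ℝ}
    (h : shiftedCone P u ∩ latticePts (d + 1) ⊆ shiftedCone P v ∩ latticePts (d + 1)) :
    ⌈(Int.cast ∘ a i) ⬝ᵥ v⌉ ≤ ⌈(Int.cast ∘ a i) ⬝ᵥ u⌉ := by
  by_contra! hlt
  obtain ⟨D, hD, w, hwi, hwj⟩ := hP.exists_int_facet_direction hPab hirr i
  obtain ⟨z, n, hn, hzi, hzj⟩ :=
    exists_pos_dotProduct_eq_add_forall_le hprim hD hwi hwj fun j => ⌈(Int.cast ∘ a j) ⬝ᵥ u⌉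
  have hy := h ⟨(intCast_snoc_mem_shiftedCone_iff hPab hP.nonempty u z hn).mpr hzj,
    mem_latticePts_iff_exists_snoc.mpr ⟨z, n, rfl⟩⟩
  have := (intCast_snoc_mem_shiftedCone_iff hPab hP.nonempty v z hn).mp hy.1 i
  omega

end Polytope

theorem stmt8 {d m : ℕ} (P : Set (Fin d → ℝ)) (hP : IsRationalDPolytope P)
    (a : Fin m → Fin d → ℤ) (b : Fin m → ℤ)
    -- the irredundant presentation `P = ⋂ᵢ {x : ⟨aᵢ, x⟩ ≥ bᵢ}` by primitive `(aᵢ, bᵢ)`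
    (hpres : P = ⋂ i, {x : Fin d → ℝ | (b i : ℝ) ≤ ∑ j, (a i j : ℝ) * x j})
    (hprim : ∀ i, Finset.univ.gcd (Fin.cons (b i) (a i)) = 1)
    (hirr : ∀ i : Fin m,
      (⋂ j ∈ Finset.univ.erase i, {x : Fin d → ℝ | (b j : ℝ) ≤ ∑ l, (a j l : ℝ) * x l}) ≠ P)
    (u v : Fin d → ℝ) :
    ((fun y => y + (Fin.snoc u 0 : Fin (d + 1) → ℝ)) '' coneOver P ∩ latticePts (d + 1) =
        (fun y => y + (Fin.snoc v 0 : Fin (d + 1) → ℝ)) '' coneOver P ∩ latticePts (d + 1)) ↔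
      ∀ i, ⌈∑ j, (a i j : ℝ) * u j⌉ = ⌈∑ j, (a i j : ℝ) * v j⌉ := by
  have hPab : P = ⋂ i, {x | (b i : ℝ) ≤ (Int.cast ∘ a i) ⬝ᵥ x} := hpres
  refine ⟨fun h i => le_antisymm ?_ ?_,
    shiftedCone_inter_latticePts_eq_of_ceil_eq hPab hP.isBounded hP.nonempty⟩
  · exact hP.ceil_dotProduct_le_of_subset hPab hirr i (hprim i) h.ge
  · exact hP.ceil_dotProduct_le_of_subset hPab hirr i (hprim i) h.le
end
end

section
/- Let P ⊂ ℝ^d be a rational d-polytope, v ∈ ℝ^d, let q be a positive integer such that qP is integral, and let k ∈ ℤ_{≥0}. If f is a real polynomial satisfying f(t) = #((tP + v) ∩ ℤ^d) for every t ∈ ℤ_{≥0} with t ≡ k (mod q), then f has degree exactly d and the coefficient of t^d in f equals the d-dimensional Lebesgue volume of P. -/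
/-!
Placing the unit cube `z + [0,1)^d` at each lattice point `z` of a set `S` gives disjoint cubes
of volume one, so `#(S ∩ ℤ^d)` is at least the volume of any set whose unit balls lie in `S`, and
at most the volume of any set containing the unit balls around `S`. If `P` is convex and contains
a ball of radius `ε`, then `(t - 1/ε)P` and `(t + 1/ε)P`, suitably translated, are such inner and
outer sets for `tP + v`, whence `(t - 1/ε)^d vol P ≤ #((tP + v) ∩ ℤ^d) ≤ (t + 1/ε)^d vol P`.
Thus `f(t) / t^d → vol P > 0` along `t ≡ k (mod q)`, which forces `deg f = d` with leading
coefficient `vol P`.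
-/

open Set Pointwise

noncomputable section

open MeasureTheory Metric Filter Topology ENNReal

section Lattice

variable {d : ℕ}

lemma latticePts_eq_span :
    latticePts d = Submodule.span ℤ (range (Pi.basisFun ℝ (Fin d))) := by
  ext x
  simp only [SetLike.mem_coe, Module.Basis.mem_span_iff_repr_mem, Pi.basisFun_repr, latticePts,
    mem_ofPred_eq, mem_range, algebraMap_int_eq, eq_intCast]
  exact forall_congr' fun i => exists_congr fun n => eq_comm

lemma finite_inter_latticePts {S : Set (Fin d → ℝ)} (hS : Bornology.IsBounded S) :
    (S ∩ latticePts d).Finite := by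
  rw [latticePts_eq_span]
  exact ZSpan.setFinite_inter _ hS

def unitCube (d : ℕ) : Set (Fin d → ℝ) := pi univ fun _ => Ico 0 1

lemma measurableSet_unitCube : MeasurableSet (unitCube d) :=
  MeasurableSet.univ_pi fun _ => measurableSet_Ico

def latticeFloor (x : Fin d → ℝ) : Fin d → ℝ := fun i => ⌊x i⌋

lemma latticeFloor_mem_latticePts (x : Fin d → ℝ) : latticeFloor x ∈ latticePts d :=
  fun i => ⟨⌊x i⌋, rfl⟩

lemma mem_latticeFloor_vadd_unitCube (x : Fin d → ℝ) : x ∈ latticeFloor x +ᵥ unitCube d :=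
  ⟨x - latticeFloor x, fun i _ => ⟨sub_nonneg.2 (Int.floor_le _),
    sub_lt_comm.1 (Int.sub_one_lt_floor _)⟩, by simp⟩

lemma latticeFloor_eq_of_mem_vadd_unitCube {z x : Fin d → ℝ} (hz : z ∈ latticePts d)
    (hx : x ∈ z +ᵥ unitCube d) : latticeFloor x = z := by
  obtain ⟨c, hc, rfl⟩ := hx
  funext i
  obtain ⟨n, hn⟩ := hz i
  obtain ⟨h0, h1⟩ := hc i (mem_univ i)
  have : ⌊(n : ℝ) + c i⌋ = n := by
    rw [Int.floor_eq_iff]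
    constructor <;> linarith
  simp only [latticeFloor, vadd_eq_add, Pi.add_apply, this, hn]

lemma dist_latticeFloor_le (x : Fin d → ℝ) : dist (latticeFloor x) x ≤ 1 := by
  refine (dist_pi_le_iff zero_le_one).2 fun i => ?_
  rw [Real.dist_eq, abs_sub_comm, abs_le]
  constructor <;> simp only [latticeFloor] <;>
    linarith [Int.floor_le (x i), Int.lt_floor_add_one (x i)]

lemma vadd_unitCube_subset_closedBall (z : Fin d → ℝ) : z +ᵥ unitCube d ⊆ closedBall z 1 := by
  rintro _ ⟨c, hc, rfl⟩
  simp only [mem_closedBall, dist_eq_norm, vadd_eq_add, add_sub_cancel_left]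
  refine (pi_norm_le_iff_of_nonneg zero_le_one).2 fun i => ?_
  obtain ⟨h0, h1⟩ := hc i (mem_univ i)
  rw [Real.norm_eq_abs, abs_le]
  constructor <;> linarith

lemma volume_biUnion_vadd_unitCube {A : Set (Fin d → ℝ)} (hA : A.Finite)
    (hAΛ : A ⊆ latticePts d) : volume (⋃ z ∈ A, z +ᵥ unitCube d) = A.ncard := by
  have hdisj : A.PairwiseDisjoint (· +ᵥ unitCube d) := fun z hz z' hz' hne =>
    disjoint_left.2 fun x hx hx' => hne <|
      (latticeFloor_eq_of_mem_vadd_unitCube (hAΛ hz) hx).symm.trans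
        (latticeFloor_eq_of_mem_vadd_unitCube (hAΛ hz') hx')
  have hcube : volume (unitCube d) = 1 := by simp [unitCube, volume_pi_pi]
  rw [show (⋃ z ∈ A, z +ᵥ unitCube d) = ⋃ z ∈ hA.toFinset, z +ᵥ unitCube d by simp,
    measure_biUnion_finset (by simpa using hdisj)
      fun z _ => measurableSet_unitCube.const_vadd z, ncard_eq_toFinset_card _ hA]
  simp [measure_vadd, hcube]

lemma ncard_inter_latticePts_le_volume {S U : Set (Fin d → ℝ)}
    (h : ∀ x ∈ S, closedBall x 1 ⊆ U) : ((S ∩ latticePts d).ncard : ℝ≥0∞) ≤ volume U := by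
  by_cases hfin : (S ∩ latticePts d).Finite
  · rw [← volume_biUnion_vadd_unitCube hfin inter_subset_right]
    exact measure_mono <| iUnion₂_subset fun z hz =>
      (vadd_unitCube_subset_closedBall z).trans (h z hz.1)
  · simp [Set.Infinite.ncard hfin]

lemma volume_le_ncard_inter_latticePts {S T : Set (Fin d → ℝ)} (hS : (S ∩ latticePts d).Finite)
    (h : ∀ x ∈ T, closedBall x 1 ⊆ S) : volume T ≤ (S ∩ latticePts d).ncard := by
  rw [← volume_biUnion_vadd_unitCube hS inter_subset_right]
  refine measure_mono fun x hx => mem_biUnion ⟨h x hx ?_, latticeFloor_mem_latticePts x⟩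
    (mem_latticeFloor_vadd_unitCube x)
  exact mem_closedBall.2 (dist_latticeFloor_le x)

end Lattice

section ConvexBody

variable {d : ℕ}

lemma volume_image_smul_add {a : ℝ} (ha : 0 ≤ a) (w : Fin d → ℝ) (A : Set (Fin d → ℝ)) :
    volume ((fun x => a • x + w) '' A) = ENNReal.ofReal (a ^ d) * volume A := by
  rw [← image_image (· + w) (a • ·), image_smul, image_add_right, measure_preimage_add_right,
    Measure.addHaar_smul_of_nonneg volume ha, Module.finrank_fin_fun]

/-- `closedBall 0 1 = ε⁻¹ • (closedBall x₀ ε - x₀)`, and `a • P + ε⁻¹ • P = (a + ε⁻¹) • P` by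
convexity. -/
lemma Convex.closedBall_smul_add_subset {P : Set (Fin d → ℝ)} (hP : Convex ℝ P) {x₀ : Fin d → ℝ}
    {ε : ℝ} (hε : 0 < ε) (hball : closedBall x₀ ε ⊆ P) {a : ℝ} (ha : 0 ≤ a) (w : Fin d → ℝ)
    {p : Fin d → ℝ} (hp : p ∈ P) :
    closedBall (a • p + w) 1 ⊆ (fun x => (a + ε⁻¹) • x + (w - ε⁻¹ • x₀)) '' P := by
  intro y hy
  have hnear : x₀ + ε • (y - (a • p + w)) ∈ P := by
    refine hball (mem_closedBall_iff_norm.2 ?_)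
    rw [add_sub_cancel_left, norm_smul, Real.norm_of_nonneg hε.le]
    exact mul_le_of_le_one_right hε.le (mem_closedBall_iff_norm.1 hy)
  obtain ⟨p', hp', hp'eq⟩ : a • p + ε⁻¹ • (x₀ + ε • (y - (a • p + w))) ∈ (a + ε⁻¹) • P := by
    rw [hP.add_smul ha (inv_nonneg.2 hε.le)]
    exact add_mem_add (smul_mem_smul_set hp) (smul_mem_smul_set hnear)
  refine ⟨p', hp', ?_⟩
  simp only at hp'eq ⊢
  rw [hp'eq, smul_add, smul_smul, inv_mul_cancel₀ hε.ne', one_smul]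
  abel

lemma TL_le_add_inv_pow_mul_volume {P : Set (Fin d → ℝ)} (hP : Convex ℝ P) {x₀ : Fin d → ℝ} {ε : ℝ}
    (hε : 0 < ε) (hball : closedBall x₀ ε ⊆ P) (v : Fin d → ℝ) (t : ℕ) :
    (TL P v t : ℝ≥0∞) ≤ ENNReal.ofReal ((t + ε⁻¹) ^ d) * volume P := by
  rw [← volume_image_smul_add (by positivity) (v - ε⁻¹ • x₀)]
  refine ncard_inter_latticePts_le_volume ?_
  rintro _ ⟨p, hp, rfl⟩
  exact hP.closedBall_smul_add_subset hε hball t.cast_nonneg v hp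

lemma sub_inv_pow_mul_volume_le_TL {P : Set (Fin d → ℝ)} (hP : Convex ℝ P) (hPc : IsCompact P)
    {x₀ : Fin d → ℝ} {ε : ℝ} (hε : 0 < ε) (hball : closedBall x₀ ε ⊆ P) (v : Fin d → ℝ)
    {t : ℕ} (ht : ε⁻¹ ≤ t) :
    ENNReal.ofReal ((t - ε⁻¹) ^ d) * volume P ≤ TL P v t := by
  have hbdd : Bornology.IsBounded ((fun x => (t : ℝ) • x + v) '' P) :=
    (hPc.image (by fun_prop)).isBounded
  rw [← volume_image_smul_add (sub_nonneg.2 ht) (v + ε⁻¹ • x₀)]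
  refine volume_le_ncard_inter_latticePts (finite_inter_latticePts hbdd) ?_
  rintro _ ⟨p, hp, rfl⟩
  convert hP.closedBall_smul_add_subset hε hball (sub_nonneg.2 ht) _ hp using 3
  · rw [sub_add_cancel]
  · exact (add_sub_cancel_right v _).symm

end ConvexBody

section Asymptotics

lemma tendsto_add_const_pow_div_pow (r : ℝ) (d : ℕ) :
    Tendsto (fun t : ℕ => ((t : ℝ) + r) ^ d / (t : ℝ) ^ d) atTop (𝓝 1) := by
  have h : Tendsto (fun t : ℕ => (1 + r / t) ^ d) atTop (𝓝 1) := by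
    simpa using ((tendsto_const_div_atTop_nhds_zero_nat r).const_add 1).pow d
  refine h.congr' ?_
  filter_upwards [eventually_gt_atTop 0] with t ht
  rw [← div_pow, add_div, div_self (by positivity)]

theorem tendsto_TL_div_pow {d : ℕ} {P : Set (Fin d → ℝ)} (hP : Convex ℝ P) (hPc : IsCompact P)
    (hint : (interior P).Nonempty) (v : Fin d → ℝ) :
    Tendsto (fun t : ℕ => (TL P v t : ℝ) / (t : ℝ) ^ d) atTop (𝓝 (volume P).toReal) := by
  obtain ⟨x₀, hx₀⟩ := hint
  obtain ⟨ε, hε, hball⟩ : ∃ ε > 0, closedBall x₀ ε ⊆ P :=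
    nhds_basis_closedBall.mem_iff.1 (mem_interior_iff_mem_nhds.1 hx₀)
  have hfin : volume P ≠ ∞ := hPc.measure_lt_top.ne
  have lower := (tendsto_add_const_pow_div_pow (-ε⁻¹) d).mul_const (volume P).toReal
  have upper := (tendsto_add_const_pow_div_pow ε⁻¹ d).mul_const (volume P).toReal
  rw [one_mul] at lower upper
  refine tendsto_of_tendsto_of_tendsto_of_le_of_le' lower upper ?_ ?_
  · filter_upwards [eventually_ge_atTop ⌈ε⁻¹⌉₊] with t ht
    have ht' : ε⁻¹ ≤ t := Nat.ceil_le.1 ht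
    have h := ENNReal.toReal_mono (natCast_ne_top _)
      (sub_inv_pow_mul_volume_le_TL hP hPc hε hball v ht')
    rw [toReal_mul, toReal_ofReal (pow_nonneg (sub_nonneg.2 ht') d), toReal_natCast] at h
    rw [div_mul_eq_mul_div, ← sub_eq_add_neg]
    gcongr
  · filter_upwards with t
    have h := ENNReal.toReal_mono (mul_ne_top ofReal_ne_top hfin)
      (TL_le_add_inv_pow_mul_volume hP hε hball v t)
    rw [toReal_mul, toReal_ofReal (by positivity), toReal_natCast] at h
    rw [div_mul_eq_mul_div]
    gcongr

open Polynomial in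
theorem Polynomial.degree_eq_and_coeff_eq_of_tendsto_eval_div_pow {α : Type*} {l : Filter α}
    [l.NeBot] {g : α → ℝ} (hg : Tendsto g l atTop) {f : ℝ[X]} {d : ℕ} {c : ℝ} (hc : c ≠ 0)
    (h : Tendsto (fun a => f.eval (g a) / g a ^ d) l (𝓝 c)) :
    f.degree = d ∧ f.coeff d = c := by
  have hX : ∀ x : ℝ, (X ^ d : ℝ[X]).eval x = x ^ d := by simp
  have hdeg : (X ^ d : ℝ[X]).degree = d := degree_X_pow d
  rcases lt_trichotomy f.degree d with hlt | heq | hgt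
  · have h0 := (div_tendsto_atTop_zero_of_degree_lt f _ (hdeg ▸ hlt)).comp hg
    simp only [Function.comp_def, hX] at h0
    exact absurd (tendsto_nhds_unique h h0) hc
  · have hlc := (div_tendsto_atTop_leadingCoeff_div_of_degree_eq f _ (hdeg ▸ heq)).comp hg
    simp only [Function.comp_def, hX, leadingCoeff_X_pow, div_one] at hlc
    refine ⟨heq, ?_⟩
    rw [← tendsto_nhds_unique hlc h, leadingCoeff, natDegree_eq_of_degree_eq_some heq]
  · have hinf := (abs_div_tendsto_atTop_atTop_of_degree_gt f _ (hdeg ▸ hgt)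
      (pow_ne_zero d X_ne_zero)).comp hg
    simp only [Function.comp_def, hX] at hinf
    exact absurd h.abs (not_tendsto_nhds_of_tendsto_atTop hinf _)

end Asymptotics

theorem stmt10_general {d : ℕ} (P : Set (Fin d → ℝ)) (hP : IsRationalDPolytope P)
    (v : Fin d → ℝ) (q : ℕ) (hq : 0 < q)
    (k : ℕ) (f : Polynomial ℝ)
    (hf : ∀ t : ℕ, t % q = k % q → f.eval (t : ℝ) = (TL P v t : ℝ)) :
    f.degree = (d : ℕ) ∧ f.coeff d = (MeasureTheory.volume P).toReal := by
  obtain ⟨V, -, hPV, hspan⟩ := hP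
  have hconv : Convex ℝ P := hPV ▸ convex_convexHull ℝ _
  have hcomp : IsCompact P := hPV ▸ V.finite_toSet.isCompact_convexHull (𝕜 := ℝ)
  have hint : (interior P).Nonempty := hconv.interior_nonempty_iff_affineSpan_eq_top.2 hspan
  have hvol : (volume P).toReal ≠ 0 := (ENNReal.toReal_pos
    (Measure.measure_pos_of_nonempty_interior _ hint).ne' hcomp.measure_lt_top.ne).ne'
  set u : ℕ → ℕ := fun n => k + n * q
  have hu : Tendsto u atTop atTop :=
    tendsto_atTop_mono (fun n => le_add_left (Nat.le_mul_of_pos_right n hq)) tendsto_id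
  refine Polynomial.degree_eq_and_coeff_eq_of_tendsto_eval_div_pow
    (tendsto_natCast_atTop_atTop.comp hu) hvol
    (((tendsto_TL_div_pow hconv hcomp hint v).comp hu).congr fun n => ?_)
  simp only [Function.comp_apply, hf (u n) (Nat.add_mul_mod_self_right k n q)]

theorem stmt10 {d : ℕ} (P : Set (Fin d → ℝ)) (hP : IsRationalDPolytope P)
    (v : Fin d → ℝ) (q : ℕ) (hq : 0 < q)
    -- `qP` is integral: every vertex (extreme point) of `P` lies in `(1/q)ℤ^d`
    (hqP : ∀ x ∈ Set.extremePoints ℝ P, ∀ i, ∃ n : ℤ, (q : ℝ) * x i = (n : ℝ))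
    (k : ℕ) (f : Polynomial ℝ)
    (hf : ∀ t : ℕ, t % q = k % q → f.eval (t : ℝ) = (TL P v t : ℝ)) :
    f.degree = (d : ℕ) ∧ f.coeff d = (MeasureTheory.volume P).toReal :=
  stmt10_general P hP v q hq k f hf
end
end

section
/- Let X ⊂ ℝ^d be a convex cone with apex 0 whose interior is nonempty (i.e., X is d-dimensional). Then there exist vectors b_1, …, b_d ∈ ℤ^d, all contained in the interior of X, that form a ℤ-basis of ℤ^d. -/
open Set

noncomputable section

open Pointwise

private lemma smul_interior {d : ℕ} {X : Set (Fin d → ℝ)}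
    (hcone : ∀ s : ℝ, 0 ≤ s → ∀ x ∈ X, s • x ∈ X)
    {s : ℝ} (hs : 0 < s) {x : Fin d → ℝ} (hx : x ∈ interior X) :
    s • x ∈ interior X := by
  have h1 : s • X ⊆ X := by
    rintro y ⟨x', hx', rfl⟩
    exact hcone s hs.le x' hx'
  have h2 : s • x ∈ s • interior X := Set.smul_mem_smul_set hx
  rw [← interior_smul₀ hs.ne' X] at h2
  exact interior_mono h1 h2

private lemma exists_int_interior {d : ℕ} {X : Set (Fin d → ℝ)}
    (hcone : ∀ s : ℝ, 0 ≤ s → ∀ x ∈ X, s • x ∈ X)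
    (hint : (interior X).Nonempty) :
    ∃ v : Fin d → ℤ, (fun j => ((v j : ℤ) : ℝ)) ∈ interior X := by
  obtain ⟨x, hx⟩ := hint
  obtain ⟨ε, hε, hball⟩ := Metric.isOpen_iff.1 isOpen_interior x hx
  obtain ⟨n, hn⟩ := exists_nat_gt (1 / ε)
  set m : ℕ := n + 1 with hm
  have hmR : (1:ℝ)/ε < m := by
    have h : (n:ℝ) < (m:ℝ) := by exact_mod_cast Nat.lt_succ_self n
    linarith
  have hmpos : (0:ℝ) < m := lt_of_le_of_lt (by positivity) hmR
  refine ⟨fun j => ⌊(m:ℝ) * x j⌋, ?_⟩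
  have hy : ((m:ℝ))⁻¹ • (fun j => ((⌊(m:ℝ) * x j⌋ : ℤ) : ℝ)) ∈ Metric.ball x ε := by
    rw [Metric.mem_ball, dist_pi_lt_iff hε]
    intro j
    have h1 : (⌊(m:ℝ) * x j⌋ : ℝ) ≤ (m:ℝ) * x j := Int.floor_le _
    have h2 : (m:ℝ) * x j < ⌊(m:ℝ) * x j⌋ + 1 := Int.lt_floor_add_one _
    have : ((m:ℝ))⁻¹ • (fun j => ((⌊(m:ℝ) * x j⌋ : ℤ) : ℝ)) = fun j => ((⌊(m:ℝ) * x j⌋ : ℝ)) / m := by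
      funext j; simp [div_eq_inv_mul]
    rw [this, Real.dist_eq]
    have h3 : |(⌊(m:ℝ) * x j⌋ : ℝ) / m - x j| ≤ 1 / m := by
      have he : (⌊(m:ℝ) * x j⌋ : ℝ) / m - x j = ((⌊(m:ℝ) * x j⌋ : ℝ) - m * x j) / m := by
        field_simp
      rw [he, abs_div, abs_of_pos hmpos]
      gcongr
      rw [abs_le]
      constructor <;> linarith
    have h4 : 1 / (m:ℝ) < ε := by
      rw [div_lt_iff₀ hmpos]
      rw [div_lt_iff₀ hε] at hmR
      linarith
    linarith
  have := smul_interior hcone hmpos (hball hy)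
  rwa [smul_inv_smul₀ hmpos.ne'] at this

private lemma key_lemma {d : ℕ} {X : Set (Fin d → ℝ)}
    (hcone : ∀ s : ℝ, 0 ≤ s → ∀ x ∈ X, s • x ∈ X)
    {v : Fin d → ℤ} (hv : (fun j => ((v j : ℤ) : ℝ)) ∈ interior X) (r : Fin d → ℤ) :
    ∃ N0 : ℤ, 1 ≤ N0 ∧ ∀ N : ℤ, N0 ≤ N →
      (fun j => ((N * v j + r j : ℤ) : ℝ)) ∈ interior X := by
  obtain ⟨ε, hε, hball⟩ := Metric.isOpen_iff.1 isOpen_interior _ hv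
  set B : ℝ := ‖(fun j => ((r j : ℤ) : ℝ))‖ with hB
  have hB0 : 0 ≤ B := norm_nonneg _
  obtain ⟨n, hn⟩ := exists_nat_gt (B / ε)
  refine ⟨(n:ℤ) + 1, by omega, fun N hN => ?_⟩
  have hNR : B / ε < (N:ℝ) := by
    have : ((n:ℤ):ℝ) + 1 ≤ (N:ℝ) := by exact_mod_cast hN
    push_cast at this ⊢
    linarith
  have hNpos : (0:ℝ) < N := lt_of_le_of_lt (by positivity) hNR
  have hy : (fun j => ((v j : ℤ):ℝ)) + ((N:ℝ))⁻¹ • (fun j => ((r j : ℤ) : ℝ)) ∈ Metric.ball (fun j => ((v j : ℤ):ℝ)) ε := by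
    rw [Metric.mem_ball, dist_self_add_left, norm_smul, Real.norm_eq_abs,
      abs_of_pos (by positivity : (0:ℝ) < (N:ℝ)⁻¹)]
    have h5 : B < (N:ℝ) * ε := by rwa [div_lt_iff₀ hε] at hNR
    have h6 := mul_lt_mul_of_pos_left h5 (by positivity : (0:ℝ) < ((N:ℝ))⁻¹)
    rwa [inv_mul_cancel_left₀ hNpos.ne'] at h6
  have hmem := smul_interior hcone hNpos (hball hy)
  have heq : (N:ℝ) • ((fun j => ((v j : ℤ):ℝ)) + ((N:ℝ))⁻¹ • (fun j => ((r j : ℤ) : ℝ)))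
      = fun j => ((N * v j + r j : ℤ) : ℝ) := by
    funext j
    simp only [Pi.smul_apply, Pi.add_apply, smul_eq_mul]
    push_cast
    rw [mul_add, mul_inv_cancel_left₀ hNpos.ne']
  rwa [heq] at hmem

private lemma basis_of_unimodular {d : ℕ} (B : Matrix (Fin d) (Fin d) ℤ)
    (hB : IsUnit B.det) (z : Fin d → ℤ) :
    ∃! c : Fin d → ℤ, z = ∑ i, c i • B i := by
  have hBt : IsUnit B.transpose.det := by rwa [Matrix.det_transpose]
  have hrepr : ∀ c : Fin d → ℤ, (∑ i, c i • B i) = B.transpose.mulVec c := by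
    intro c; funext jj
    simp [Matrix.mulVec, dotProduct, Finset.sum_apply, Matrix.transpose_apply, mul_comm]
  refine ⟨B.transpose⁻¹.mulVec z, ?_, ?_⟩
  · show z = ∑ i, B.transpose⁻¹.mulVec z i • B i
    rw [hrepr, Matrix.mulVec_mulVec, Matrix.mul_nonsing_inv _ hBt, Matrix.one_mulVec]
  · intro c hc
    rw [hrepr] at hc
    rw [hc, Matrix.mulVec_mulVec, Matrix.nonsing_inv_mul _ hBt, Matrix.one_mulVec]

theorem stmt17 {d : ℕ} (X : Set (Fin d → ℝ))
    (hconv : Convex ℝ X)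
    (hcone : ∀ s : ℝ, 0 ≤ s → ∀ x ∈ X, s • x ∈ X)
    (hint : (interior X).Nonempty) :
    ∃ b : Fin d → Fin d → ℤ,
      (∀ i, (fun j => ((b i j : ℤ) : ℝ)) ∈ interior X) ∧
      ∀ z : Fin d → ℤ, ∃! c : Fin d → ℤ, z = ∑ i, c i • b i := by
  obtain ⟨v, hv⟩ := exists_int_interior hcone hint
  by_cases hv0 : ∀ k, v k ≠ 0 → False
  · -- v = 0, so 0 ∈ interior X, so X = univ
    have h0 : (0 : Fin d → ℝ) ∈ interior X := by
      have : (fun j => ((v j : ℤ) : ℝ)) = (0 : Fin d → ℝ) := by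
        funext j
        by_contra h
        exact hv0 j (fun hz => h (by simp [hz])) |>.elim
      rwa [this] at hv
    have hIX : interior X = univ := by
      have hX : X = univ := by
        obtain ⟨ε, hε, hball⟩ := Metric.isOpen_iff.1 isOpen_interior _ h0
        ext y; simp only [mem_univ, iff_true]
        rcases eq_or_ne y 0 with rfl | hy
        · exact interior_subset h0
        · have hny : 0 < ‖y‖ := norm_pos_iff.2 hy
          have hrw : y = (2 * ‖y‖ / ε) • ((ε / (2 * ‖y‖)) • y) := by
            rw [smul_smul]
            have : 2 * ‖y‖ / ε * (ε / (2 * ‖y‖)) = 1 := by field_simp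
            rw [this, one_smul]
          rw [hrw]
          apply hcone _ (by positivity)
          apply interior_subset
          apply hball
          rw [Metric.mem_ball, dist_zero_right, norm_smul, Real.norm_eq_abs,
            abs_of_pos (by positivity : (0:ℝ) < ε / (2 * ‖y‖))]
          have : ε / (2 * ‖y‖) * ‖y‖ = ε / 2 := by field_simp
          rw [this]
          linarith
      rw [hX, interior_univ]
    refine ⟨fun i => (1 : Matrix (Fin d) (Fin d) ℤ) i, fun i => by rw [hIX]; trivial, ?_⟩
    exact basis_of_unimodular 1 (by simp) 
  · push_neg at hv0
    obtain ⟨k, hk, -⟩ := hv0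
    by_cases hd : ∃ j : Fin d, j ≠ k
    · obtain ⟨j, hjk⟩ := hd
      have hkj : k ≠ j := Ne.symm hjk
      set t : ℤ := |v j| + 1 with ht
      set U : Matrix (Fin d) (Fin d) ℤ := Matrix.transvection k j t with hU
      set c : Fin d → ℤ := fun i => if i = j then v j - t * v k else v i with hc
      have hcj : c j = v j - t * v k := by simp [hc]
      have hck : c k = v k := by simp [hc, hkj]
      have hab : c j * c k < 0 := by
        rcases hk.lt_or_gt with h | h
        · have h1 : 1 ≤ c j := by
            rw [hcj, ht]; nlinarith [abs_nonneg (v j), neg_abs_le (v j)]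
          have h2 : c k < 0 := by rw [hck]; exact h
          exact mul_neg_of_pos_of_neg (by linarith) h2
        · have h1 : c j ≤ -1 := by
            rw [hcj, ht]; nlinarith [abs_nonneg (v j), le_abs_self (v j)]
          exact mul_neg_of_neg_of_pos (by linarith) (hck ▸ h)
      have hvrep : ∀ jj, (∑ i, c i * U i jj) = v jj := by
        intro jj
        have hUapp : ∀ i, U i jj = (if i = jj then 1 else 0) + (if k = i ∧ j = jj then t else 0) := by
          intro i
          rw [hU]
          simp [Matrix.transvection, Matrix.one_apply, Matrix.single]
        simp only [hUapp, mul_add, Finset.sum_add_distrib, mul_ite, mul_one, mul_zero]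
        by_cases hjj : j = jj
        · subst hjj
          simp only [and_true, Finset.sum_ite_eq, Finset.sum_ite_eq', Finset.mem_univ, if_true]
          rw [hcj, hck]; ring
        · simp only [hjj, and_false, if_false, Finset.sum_const_zero, add_zero,
            Finset.sum_ite_eq', Finset.mem_univ, if_true]
          rw [hc]
          simp only [if_neg (fun h => hjj (h ▸ rfl) : ¬ jj = j)]
      have hkeyrow : ∀ i : Fin d, ∃ N0 : ℤ, 1 ≤ N0 ∧ ∀ N : ℤ, N0 ≤ N →
          (fun jj => ((N * v jj + U i jj : ℤ) : ℝ)) ∈ interior X :=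
        fun i => key_lemma hcone hv (fun jj => U i jj)
      choose N0 hN01 hN0 using hkeyrow
      set T : ℤ := ∑ i, N0 i with hT
      have hTi : ∀ i, N0 i ≤ T := fun i =>
        Finset.single_le_sum (fun i _ => le_trans zero_le_one (hN01 i)) (Finset.mem_univ i)
      have hT1 : 1 ≤ T := le_trans (hN01 k) (hTi k)
      set S : ℤ := ∑ i ∈ (Finset.univ.erase j).erase k, c i with hS
      set a : ℤ := c j with ha
      set b' : ℤ := c k with hb'
      have hb'ne : b' ≠ 0 := by
        intro h; rw [h, mul_zero] at hab; exact lt_irrefl 0 hab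
      set p : ℤ := if 0 < b' then b' else -b' with hp
      set q : ℤ := if 0 < b' then -a else a with hq
      have hp1 : 1 ≤ p := by
        rw [hp]; by_cases h : 0 < b'
        · rw [if_pos h]; omega
        · rw [if_neg h]; omega
      have hq1 : 1 ≤ q := by
        rw [hq]; by_cases h : 0 < b'
        · rw [if_pos h]; nlinarith
        · rw [if_neg h]
          have hb : b' < 0 := by omega
          nlinarith
      have hpq : a * p + b' * q = 0 := by
        rw [hp, hq]; by_cases h : 0 < b'
        · rw [if_pos h, if_pos h]; ring
        · rw [if_neg h, if_neg h]; ring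
      set T₂ : ℤ := T + |b' * T * S| with hT₂
      have hT₂0 : 0 ≤ T₂ := by
        have := abs_nonneg (b' * T * S); rw [hT₂]; linarith
      set N : Fin d → ℤ :=
        fun i => if i = j then b' * T * S + p * T₂ else if i = k then q * T₂ else (-(a * b')) * T
        with hN
      have hNj : N j = b' * T * S + p * T₂ := by rw [hN]; simp
      have hNk : N k = q * T₂ := by rw [hN]; simp [hkj]
      have hNo : ∀ i, i ≠ j → i ≠ k → N i = (-(a * b')) * T := by
        intro i h1 h2; rw [hN]; simp [h1, h2]
      have hNge : ∀ i, N0 i ≤ N i := by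
        intro i
        refine le_trans (hTi i) ?_
        by_cases hij : i = j
        · subst hij; rw [hNj]
          nlinarith [mul_nonneg (by linarith : (0:ℤ) ≤ p - 1) hT₂0,
            neg_abs_le (b' * T * S), abs_nonneg (b' * T * S)]
        · by_cases hik : i = k
          · subst hik; rw [hNk]
            nlinarith [mul_nonneg (by linarith : (0:ℤ) ≤ q - 1) hT₂0,
              abs_nonneg (b' * T * S)]
          · rw [hNo i hij hik]
            nlinarith [mul_nonneg (by linarith : (0:ℤ) ≤ -(a * b') - 1) (by linarith : (0:ℤ) ≤ T)]
      have hsum : ∑ i, c i * N i = 0 := by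
        rw [← Finset.add_sum_erase _ _ (Finset.mem_univ j),
          ← Finset.add_sum_erase _ _ (Finset.mem_erase.2 ⟨hkj, Finset.mem_univ k⟩)]
        have hrest : ∑ i ∈ (Finset.univ.erase j).erase k, c i * N i = S * ((-(a * b')) * T) := by
          rw [hS, Finset.sum_mul]
          apply Finset.sum_congr rfl
          intro i hi
          obtain ⟨hik, hij, -⟩ : i ≠ k ∧ i ≠ j ∧ True := by
            rcases Finset.mem_erase.1 hi with ⟨h1, h2⟩
            rcases Finset.mem_erase.1 h2 with ⟨h3, -⟩
            exact ⟨h1, h3, trivial⟩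
          rw [hNo i hij hik]
        rw [hrest, hNj, hNk, ← ha, ← hb']
        linear_combination T₂ * hpq
      set B : Matrix (Fin d) (Fin d) ℤ := Matrix.of (fun i jj => N i * v jj + U i jj) with hBdef
      have hBfact : B = (1 + Matrix.vecMulVec N c) * U := by
        ext i jj
        rw [Matrix.mul_apply]
        have hterm : ∀ m, ((1 + Matrix.vecMulVec N c) i m) * U m jj
            = (if i = m then U m jj else 0) + N i * (c m * U m jj) := by
          intro m
          simp only [Matrix.add_apply, Matrix.one_apply, Matrix.vecMulVec_apply]
          by_cases h : i = m <;> simp [h] <;> ring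
        simp only [hterm]
        rw [Finset.sum_add_distrib, Finset.sum_ite_eq, ← Finset.mul_sum, hvrep jj]
        rw [hBdef]
        simp [Matrix.of_apply]
        ring
      have hdet : B.det = 1 := by
        rw [hBfact, Matrix.det_mul, hU, Matrix.det_transvection_of_ne k j hkj t, mul_one,
          Matrix.vecMulVec_eq (Fin 1), Matrix.det_one_add_replicateCol_mul_replicateRow]
        have hdot : dotProduct c N = 0 := hsum
        rw [hdot, add_zero]
      refine ⟨fun i => B i, ?_, fun z => basis_of_unimodular B (by rw [hdet]; exact isUnit_one) z⟩
      intro i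
      exact hN0 i (N i) (hNge i)
    · push_neg at hd
      haveI hUniq : Unique (Fin d) := ⟨⟨k⟩, fun j => hd j⟩
      set e : ℤ := if 0 < v k then 1 else -1 with he
      have habs : (0:ℝ) < (((|v k| : ℤ)):ℝ)⁻¹ := by
        have h1 : (0:ℤ) < |v k| := abs_pos.2 hk
        have h2 : (0:ℝ) < ((|v k| : ℤ):ℝ) := by exact_mod_cast h1
        positivity
      have hmem := smul_interior hcone habs hv
      refine ⟨fun _ _ => e, ?_, ?_⟩
      · intro i
        have heq : (fun _ : Fin d => ((e : ℤ):ℝ))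
            = (((|v k| : ℤ)):ℝ)⁻¹ • (fun j => ((v j : ℤ):ℝ)) := by
          funext jj
          have hjj : jj = k := hd jj
          subst hjj
          simp only [Pi.smul_apply, smul_eq_mul]
          rcases hk.lt_or_gt with h | h
          · rw [he, if_neg (by omega), abs_of_neg h]
            push_cast
            rw [← neg_inv, neg_mul]
            rw [inv_mul_cancel₀ (by exact_mod_cast hk : ((v jj : ℤ):ℝ) ≠ 0)]
          · rw [he, if_pos h, abs_of_pos h]
            push_cast
            rw [inv_mul_cancel₀ (by exact_mod_cast hk : ((v jj : ℤ):ℝ) ≠ 0)]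
        rw [heq]
        exact hmem
      · intro z
        have hdet : (Matrix.of (fun _ _ : Fin d => e)).det = e := by
          rw [Matrix.det_unique]; rfl
        have hunit : IsUnit (Matrix.of (fun _ _ : Fin d => e)).det := by
          rw [hdet, he]
          by_cases h : 0 < v k
          · rw [if_pos h]; exact isUnit_one
          · rw [if_neg h]; exact isUnit_one.neg
        exact basis_of_unimodular _ hunit z
end
end

section
/- Let d ≥ 2, let P ⊂ ℝ^d be a rational d-polytope, let π : ℝ^d → ℝ^{d-1} be the projection forgetting the last coordinate, let e_d be the last standard basis vector, and define ∂_d^- P = {x ∈ P : x ∉ P + ε e_d for every ε > 0}. Then for every v ∈ ℝ^d and every t ∈ ℤ_{≥0}, the map π restricts to a bijection from ℤ^d ∩ ⋃_{0 ≤ s < 1} (t(∂_d^- P) + v + s e_d) onto ℤ^{d-1} ∩ (t π(P) + π(v)). In particular, #(ℤ^{d-1} ∩ (t π(P) + π(v))) = #(ℤ^d ∩ ⋃_{0 ≤ s < 1} (t(∂_d^- P) + v + s e_d)). -/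
/-!
Above every point of `π(P)` the lowest point of the compact set `P` lies in `∂_d^- P`, and it is
the only point of `∂_d^- P` there; so `π` is injective on `∂_d^- P` with image `π(P)`, and this
survives the map `x ↦ t x + v`. A lattice point `z` of `t π(P) + π(v)` therefore sits below a
unique point `y` of `t ∂_d^- P + v`, and the half-open segment `y + [0, 1) e_d` contains exactly
one lattice point, the one with last coordinate `⌈y_d⌉`.
-/

open Set Pointwise

noncomputable section

/-- The last standard basis vector `e_d` of `ℝ^d` (ambient dimension `d + 1`). -/
def lastDir (d : ℕ) : Fin (d + 1) → ℝ := Pi.single (Fin.last d) 1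

/-- `∂_d^- P = {x ∈ P : x ∉ P + ε e_d for every ε > 0}`, the part of `P` visible
from `-∞ · e_d`. -/
def lowerShadow {d : ℕ} (P : Set (Fin (d + 1) → ℝ)) : Set (Fin (d + 1) → ℝ) :=
  {x ∈ P | ∀ ε : ℝ, 0 < ε → x ∉ (fun y => y + ε • lastDir d) '' P}

section LastDir

variable {d : ℕ}

@[simp]
lemma lastDir_castSucc (i : Fin d) : lastDir d i.castSucc = 0 :=
  Pi.single_eq_of_ne (Fin.castSucc_lt_last i).ne _

@[simp]
lemma lastDir_last : lastDir d (Fin.last d) = 1 :=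
  Pi.single_eq_same _ _

@[simp]
lemma init_add_smul_lastDir (x : Fin (d + 1) → ℝ) (s : ℝ) :
    Fin.init (x + s • lastDir d) = Fin.init x := by
  funext i
  simp [Fin.init]

@[simp]
lemma add_smul_lastDir_last (x : Fin (d + 1) → ℝ) (s : ℝ) :
    (x + s • lastDir d) (Fin.last d) = x (Fin.last d) + s := by
  simp

lemma eq_add_smul_lastDir_of_init_eq {a b : Fin (d + 1) → ℝ} (h : Fin.init a = Fin.init b) :
    b = a + (b (Fin.last d) - a (Fin.last d)) • lastDir d := by
  funext i
  induction i using Fin.lastCases with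
  | last => simp
  | cast i => simpa [Fin.init] using (congrFun h i).symm

lemma init_smul_add (t : ℝ) (x v : Fin (d + 1) → ℝ) :
    Fin.init (t • x + v) = t • Fin.init x + Fin.init v :=
  rfl

end LastDir

section LowerShadow

variable {d : ℕ} {P : Set (Fin (d + 1) → ℝ)}

lemma lowerShadow_subset : lowerShadow P ⊆ P := fun _ hx => hx.1

lemma injOn_init_lowerShadow : InjOn Fin.init (lowerShadow P) := by
  have key : ∀ a ∈ lowerShadow P, ∀ b ∈ lowerShadow P, Fin.init a = Fin.init b →
      b (Fin.last d) ≤ a (Fin.last d) := by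
    intro a ha b hb hab
    by_contra! hlt
    exact hb.2 _ (sub_pos.2 hlt) ⟨a, ha.1, (eq_add_smul_lastDir_of_init_eq hab).symm⟩
  intro a ha b hb hab
  rw [eq_add_smul_lastDir_of_init_eq hab,
    le_antisymm (key a ha b hb hab) (key b hb a ha hab.symm), sub_self, zero_smul, add_zero]

lemma image_init_lowerShadow (hP : IsCompact P) :
    Fin.init '' lowerShadow P = Fin.init '' P := by
  refine (image_mono lowerShadow_subset).antisymm ?_
  rintro _ ⟨p, hp, rfl⟩
  have hfibre : IsCompact (P ∩ Fin.init ⁻¹' {Fin.init p}) :=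
    hP.inter_right (isClosed_singleton.preimage (continuous_pi fun _ => continuous_apply _))
  obtain ⟨y, ⟨hyP, hyp⟩, hmin⟩ :=
    hfibre.exists_isMinOn ⟨p, hp, rfl⟩ (continuous_apply (Fin.last d)).continuousOn
  refine ⟨y, ⟨hyP, ?_⟩, hyp⟩
  rintro ε hε ⟨w, hw, rfl⟩
  have hwy : w (Fin.last d) + ε ≤ w (Fin.last d) := by
    simpa using hmin ⟨hw, by simpa using hyp⟩
  linarith

end LowerShadow

lemma IsRationalDPolytope.isCompact {d : ℕ} {P : Set (Fin d → ℝ)}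
    (hP : IsRationalDPolytope P) : IsCompact P := by
  obtain ⟨V, -, rfl, -⟩ := hP
  exact V.finite_toSet.isCompact_convexHull ℝ

lemma Set.InjOn.init_image_smul_add {d : ℕ} {S : Set (Fin (d + 1) → ℝ)}
    (hS : InjOn Fin.init S) (t : ℝ) (v : Fin (d + 1) → ℝ) :
    InjOn Fin.init ((fun x => t • x + v) '' S) := by
  rintro _ ⟨a, ha, rfl⟩ _ ⟨b, hb, rfl⟩ hab
  rcases eq_or_ne t 0 with rfl | ht
  · simp
  · rw [init_smul_add, init_smul_add, add_left_inj] at hab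
    rw [hS ha hb (smul_right_injective _ ht hab)]

lemma eq_fract_neg_of_add_eq_intCast {r s : ℝ} (hs : s ∈ Ico 0 1) {n : ℤ} (h : r + s = n) :
    s = Int.fract (-r) :=
  (Int.fract_eq_iff.2 ⟨hs.1, hs.2, -n, by push_cast; linarith⟩).symm

lemma bijOn_init_latticePts_strip {d : ℕ} {S : Set (Fin (d + 1) → ℝ)}
    (hS : InjOn Fin.init S) :
    BijOn Fin.init (latticePts (d + 1) ∩ ⋃ s ∈ Ico (0 : ℝ) 1, (· + s • lastDir d) '' S)
      (latticePts d ∩ Fin.init '' S) := by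
  simp only [BijOn, MapsTo, InjOn, SurjOn, subset_def, mem_inter_iff, mem_iUnion, mem_image,
    exists_prop]
  refine ⟨?_, ?_, ?_⟩
  · rintro _ ⟨hx, s, -, y, hy, rfl⟩
    exact ⟨fun i => hx i.castSucc, y, hy, (init_add_smul_lastDir y s).symm⟩
  · rintro _ ⟨hx, s, hs, y, hy, rfl⟩ _ ⟨hx', s', hs', y', hy', rfl⟩ hxx'
    simp only [init_add_smul_lastDir] at hxx'
    obtain rfl := hS hy hy' hxx'
    obtain ⟨n, hn⟩ := hx (Fin.last d)
    obtain ⟨n', hn'⟩ := hx' (Fin.last d)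
    rw [add_smul_lastDir_last] at hn hn'
    rw [eq_fract_neg_of_add_eq_intCast hs hn, eq_fract_neg_of_add_eq_intCast hs' hn']
  · rintro _ ⟨hz, y, hy, rfl⟩
    refine ⟨y + Int.fract (-y (Fin.last d)) • lastDir d, ⟨fun i => ?_, _,
      ⟨Int.fract_nonneg _, Int.fract_lt_one _⟩, y, hy, rfl⟩, init_add_smul_lastDir _ _⟩
    induction i using Fin.lastCases with
    | last =>
      refine ⟨-⌊-y (Fin.last d)⌋, ?_⟩
      rw [add_smul_lastDir_last, ← Int.self_sub_floor]
      push_cast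
      ring
    | cast i => simpa [Fin.init] using hz i

/-- The ambient space is `ℝ^{d+1}`, and the projection forgetting the last coordinate is
`Fin.init`. -/
theorem stmt19_general {d : ℕ} (P : Set (Fin (d + 1) → ℝ))
    (hP : IsRationalDPolytope P) (v : Fin (d + 1) → ℝ) (t : ℕ) :
    Set.BijOn (Fin.init : (Fin (d + 1) → ℝ) → (Fin d → ℝ))
      (latticePts (d + 1) ∩
        ⋃ s ∈ Set.Ico (0 : ℝ) 1, (fun x => (t : ℝ) • x + v + s • lastDir d) '' lowerShadow P)
      (latticePts d ∩ (fun x => (t : ℝ) • x + Fin.init v) '' (Fin.init '' P)) ∧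
    (latticePts d ∩ (fun x => (t : ℝ) • x + Fin.init v) '' (Fin.init '' P)).ncard =
      (latticePts (d + 1) ∩
        ⋃ s ∈ Set.Ico (0 : ℝ) 1,
          (fun x => (t : ℝ) • x + v + s • lastDir d) '' lowerShadow P).ncard := by
  have hbij := bijOn_init_latticePts_strip
    ((injOn_init_lowerShadow (P := P)).init_image_smul_add (t : ℝ) v)
  have hstrip : ∀ s : ℝ, (fun x => (t : ℝ) • x + v + s • lastDir d) '' lowerShadow P =
      (· + s • lastDir d) '' ((fun x => (t : ℝ) • x + v) '' lowerShadow P) := fun s => by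
    rw [image_image]
  have hshadow : Fin.init '' ((fun x => (t : ℝ) • x + v) '' lowerShadow P) =
      (fun x => (t : ℝ) • x + Fin.init v) '' (Fin.init '' P) := by
    rw [← image_init_lowerShadow hP.isCompact, image_image, image_image]
    rfl
  simp only [hstrip, ← hshadow]
  exact ⟨hbij, hbij.ncard_eq.symm⟩

/-- Statement 19, with the ambient space `ℝ^{d+1}` (so the hypothesis `d ≥ 2` of the
natural-language statement becomes `1 ≤ d`); the projection forgetting the last
coordinate is `Fin.init`. -/
theorem stmt19 {d : ℕ} (hd : 1 ≤ d) (P : Set (Fin (d + 1) → ℝ))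
    (hP : IsRationalDPolytope P) (v : Fin (d + 1) → ℝ) (t : ℕ) :
    Set.BijOn (Fin.init : (Fin (d + 1) → ℝ) → (Fin d → ℝ))
      (latticePts (d + 1) ∩
        ⋃ s ∈ Set.Ico (0 : ℝ) 1, (fun x => (t : ℝ) • x + v + s • lastDir d) '' lowerShadow P)
      (latticePts d ∩ (fun x => (t : ℝ) • x + Fin.init v) '' (Fin.init '' P)) ∧
    (latticePts d ∩ (fun x => (t : ℝ) • x + Fin.init v) '' (Fin.init '' P)).ncard =
      (latticePts (d + 1) ∩
        ⋃ s ∈ Set.Ico (0 : ℝ) 1,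
          (fun x => (t : ℝ) • x + v + s • lastDir d) '' lowerShadow P).ncard :=
  stmt19_general P hP v t
end
end
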